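/- arXiv:2307.11219 — 9 statements merged into one kernel-verified Lean document; each statement's English description precedes it below -/
import Mathlib

section
/- Let m ≥ 3, let K ⊂ ℝ^m be a compact set of Lebesgue measure zero, and let ω be a continuity modulus satisfying the integral conditions. Let f : K → ℝ be continuous and suppose there exist constants c₁, c₂ > 0 such that for every sufficiently small δ > 0 there exists a function v_δ, differentiable on K_δ, with |f(X) − v_δ(X)| ≤ c₁ ω(δ) for all X ∈ K and |∇v_δ(X)| ≤ c₂ ω(δ)/δ for all X ∈ K_δ. Then f ∈ C^ω(K), i.e. there is a constant C with |f(X₁) − f(X₂)| ≤ C ω(|X₁ − X₂|) for all X₁, X₂ ∈ K. -/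
/-!
Take `δ = |X₁ - X₂|`. When `δ < δ₀`, the segment `[X₁, X₂]` lies in `K_δ`, so the mean value
theorem applied to `v_δ` gives `|f X₁ - f X₂| ≤ 2 c₁ ω(δ) + (c₂ ω(δ) / δ) δ`. When `δ ≥ δ₀`,
boundedness of `f` on `K` and monotonicity of `ω` give `|f X₁ - f X₂| ≤ 2 sup |f| ≤ C ω(δ)`.
-/

open MeasureTheory Metric Set Filter

noncomputable section

/-- A continuity modulus: a positive, nondecreasing, concave function on `(0,∞)`
tending to `0` at `0⁺`, with `t ↦ ω t / t` nonincreasing. -/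
def IsContinuityModulus (ω : ℝ → ℝ) : Prop :=
  (∀ t : ℝ, 0 < t → 0 < ω t) ∧
  (∀ s t : ℝ, 0 < s → s ≤ t → ω s ≤ ω t) ∧
  ConcaveOn ℝ (Set.Ioi (0:ℝ)) ω ∧
  Filter.Tendsto ω (nhdsWithin 0 (Set.Ioi (0:ℝ))) (nhds 0) ∧
  (∀ s t : ℝ, 0 < s → s ≤ t → ω t / t ≤ ω s / s)

/-- Condition A of the paper: for each `δ > 0` there is a finite `δ`-separated subset
`Z δ` of `K` whose `c₀ δ`-closed balls cover the `δ`-neighborhood of `K`, with the number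
of points of `Z δ` in any ball of radius `R ≥ δ` bounded by `c₁ (R/δ)^{m-2}`. -/
def ConditionA (m : ℕ) (K : Set (EuclideanSpace ℝ (Fin m))) (c₀ c₁ : ℝ)
    (Z : ℝ → Finset (EuclideanSpace ℝ (Fin m))) : Prop :=
  0 < c₀ ∧ 0 < c₁ ∧
  ∀ δ : ℝ, 0 < δ →
    ((Z δ : Set (EuclideanSpace ℝ (Fin m))) ⊆ K) ∧
    (∀ x ∈ Z δ, ∀ y ∈ Z δ, x ≠ y → δ ≤ dist x y) ∧
    (Metric.thickening δ K ⊆ ⋃ z ∈ Z δ, Metric.closedBall z (c₀ * δ)) ∧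
    (∀ R : ℝ, δ ≤ R → ∀ X : EuclideanSpace ℝ (Fin m),
      (((Z δ : Set (EuclideanSpace ℝ (Fin m))) ∩ Metric.closedBall X R).ncard : ℝ)
        ≤ c₁ * (R / δ) ^ (m - 2))

/-- Each point of the segment is within `dist x y / 2` of one of its endpoints. -/
theorem segment_subset_thickening {E : Type*} [NormedAddCommGroup E] [NormedSpace ℝ E]
    {s : Set E} {x y : E} {δ : ℝ} (hx : x ∈ s) (hy : y ∈ s) (hxy : dist x y < 2 * δ) :
    segment ℝ x y ⊆ thickening δ s := by
  intro p hp
  have hsum : dist x p + dist p y = dist x y := dist_add_dist_of_mem_segment hp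
  rw [mem_thickening_iff]
  by_cases hpx : dist p x < δ
  · exact ⟨x, hx, hpx⟩
  · refine ⟨y, hy, ?_⟩
    rw [dist_comm p x] at hpx
    linarith

theorem abs_sub_le_of_approx {E : Type*} [NormedAddCommGroup E] [NormedSpace ℝ E]
    {K : Set E} {f v : E → ℝ} {δ ε L : ℝ}
    (hv : ∀ X ∈ thickening δ K, DifferentiableAt ℝ v X) (hfv : ∀ X ∈ K, |f X - v X| ≤ ε)
    (hdv : ∀ X ∈ thickening δ K, ‖fderiv ℝ v X‖ ≤ L)
    {x y : E} (hx : x ∈ K) (hy : y ∈ K) (hxy : dist x y < 2 * δ) :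
    |f x - f y| ≤ 2 * ε + L * dist x y := by
  have hseg := segment_subset_thickening hx hy hxy
  have hvxy : |v x - v y| ≤ L * dist x y := by
    rw [dist_eq_norm]
    exact Convex.norm_image_sub_le_of_norm_fderiv_le (fun z hz => hv z (hseg hz))
      (fun z hz => hdv z (hseg hz)) (convex_segment x y) (right_mem_segment ℝ x y)
      (left_mem_segment ℝ x y)
  have hfx := hfv x hx
  have hfy := hfv y hy
  calc |f x - f y| = |(f x - v x) + (v x - v y) - (f y - v y)| := by ring_nf
    _ ≤ |(f x - v x) + (v x - v y)| + |f y - v y| := abs_sub _ _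
    _ ≤ |f x - v x| + |v x - v y| + |f y - v y| := by gcongr; exact abs_add_le _ _
    _ ≤ 2 * ε + L * dist x y := by linarith

theorem sufficiency_of_approximation_general {m : ℕ}
    (K : Set (EuclideanSpace ℝ (Fin m))) (hK : IsCompact K)
    (ω : ℝ → ℝ) (hω : IsContinuityModulus ω)
    (f : EuclideanSpace ℝ (Fin m) → ℝ) (hf : ContinuousOn f K)
    (c₁ c₂ : ℝ) (hc₁ : 0 < c₁) (hc₂ : 0 < c₂)
    (δ₀ : ℝ) (hδ₀ : 0 < δ₀)
    (happ : ∀ δ : ℝ, 0 < δ → δ < δ₀ →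
      ∃ v : EuclideanSpace ℝ (Fin m) → ℝ,
        (∀ X ∈ Metric.thickening δ K, DifferentiableAt ℝ v X) ∧
        (∀ X ∈ K, |f X - v X| ≤ c₁ * ω δ) ∧
        (∀ X ∈ Metric.thickening δ K, ‖fderiv ℝ v X‖ ≤ c₂ * ω δ / δ)) :
    ∃ C : ℝ, 0 < C ∧ ∀ X₁ ∈ K, ∀ X₂ ∈ K, X₁ ≠ X₂ →
      |f X₁ - f X₂| ≤ C * ω (dist X₁ X₂) := by
  obtain ⟨hω_pos, hω_mono, -, -, -⟩ := hω
  obtain ⟨M, hM⟩ := hK.exists_bound_of_continuousOn hf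
  simp only [Real.norm_eq_abs] at hM
  have hωδ₀ := hω_pos δ₀ hδ₀
  refine ⟨max (2 * c₁ + c₂) (2 * M / ω δ₀), lt_max_of_lt_left (by positivity), ?_⟩
  intro X₁ hX₁ X₂ hX₂ hne
  set d := dist X₁ X₂
  have hd : 0 < d := dist_pos.2 hne
  have hωd := hω_pos d hd
  rcases lt_or_ge d δ₀ with hnear | hfar
  · obtain ⟨v, hv, hfv, hdv⟩ := happ d hd hnear
    have key := abs_sub_le_of_approx hv hfv hdv hX₁ hX₂ (by linarith)
    rw [div_mul_cancel₀ _ hd.ne'] at key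
    calc |f X₁ - f X₂| ≤ (2 * c₁ + c₂) * ω d := by linarith
      _ ≤ _ := by gcongr; exact le_max_left _ _
  · have hM₁ := hM X₁ hX₁
    have hM₂ := hM X₂ hX₂
    have hM₀ : 0 ≤ M := (abs_nonneg _).trans hM₁
    calc |f X₁ - f X₂| ≤ 2 * M := by linarith [abs_sub (f X₁) (f X₂)]
      _ ≤ 2 * M / ω δ₀ * ω d := by
        rw [div_mul_eq_mul_div, le_div_iff₀ hωδ₀]
        gcongr
        exact hω_mono δ₀ d hδ₀ hfar
      _ ≤ _ := by gcongr; exact le_max_right _ _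

/-- Theorem 3.1 of the paper, sufficiency: if a continuous `f` on a compact
set `K` of Lebesgue measure zero admits, for all small `δ > 0`, approximants `v_δ`,
differentiable on the `δ`-neighborhood `K_δ`, with `|f - v_δ| ≤ c₁ ω(δ)` on `K` and
`|∇ v_δ| ≤ c₂ ω(δ)/δ` on `K_δ`, then `f ∈ C^ω(K)`. -/
theorem sufficiency_of_approximation {m : ℕ} (hm : 3 ≤ m)
    (K : Set (EuclideanSpace ℝ (Fin m))) (hK : IsCompact K) (hKvol : volume K = 0)
    (ω : ℝ → ℝ) (hω : IsContinuityModulus ω)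
    (C' C'' : ℝ) (hC' : 0 < C') (hC'' : 0 < C'')
    (hint1 : ∀ t : ℝ, 0 < t →
      (∫⁻ τ in Set.Ioo (0:ℝ) t, ENNReal.ofReal (ω τ / τ)) ≤ ENNReal.ofReal (C' * ω t))
    (hint2 : ∀ t : ℝ, 0 < t →
      (∫⁻ τ in Set.Ioi t, ENNReal.ofReal (ω τ / τ ^ 2)) ≤ ENNReal.ofReal (C'' * ω t / t))
    (f : EuclideanSpace ℝ (Fin m) → ℝ) (hf : ContinuousOn f K)
    (c₁ c₂ : ℝ) (hc₁ : 0 < c₁) (hc₂ : 0 < c₂)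
    (δ₀ : ℝ) (hδ₀ : 0 < δ₀)
    (happ : ∀ δ : ℝ, 0 < δ → δ < δ₀ →
      ∃ v : EuclideanSpace ℝ (Fin m) → ℝ,
        (∀ X ∈ Metric.thickening δ K, DifferentiableAt ℝ v X) ∧
        (∀ X ∈ K, |f X - v X| ≤ c₁ * ω δ) ∧
        (∀ X ∈ Metric.thickening δ K, ‖fderiv ℝ v X‖ ≤ c₂ * ω δ / δ)) :
    ∃ C : ℝ, 0 < C ∧ ∀ X₁ ∈ K, ∀ X₂ ∈ K, X₁ ≠ X₂ →
      |f X₁ - f X₂| ≤ C * ω (dist X₁ X₂) :=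
  sufficiency_of_approximation_general K hK ω hω f hf c₁ c₂ hc₁ hc₂ δ₀ hδ₀ happ
end
end

section
/- Let m ≥ 3, let K ⊂ ℝ^m be a compact set satisfying Condition A with constants c₀, c₁, let ω be a continuity modulus, fix c > max(2c₀, c₁), and let B(δ₁) be the union of the open balls of radius cδ₁ centered at the points of Z(δ₁). Then for every δ₁ > 0 the integral ∫_{B(δ₁)} ω(d(Y))/d(Y) dY is finite, where the integrand is interpreted as 0 at points of K. -/
open MeasureTheory Metric Set Filter
open scoped ENNReal

noncomputable section

lemma aux_geom_eq (w δ₁ c₁ Q c₀ : ℝ) (p k : ℕ) (hδ₁ : δ₁ ≠ 0) :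
    (w / (δ₁ * (2⁻¹:ℝ) ^ (k+1))) *
      ((c₁ * (Q / (δ₁ * (2⁻¹:ℝ) ^ k)) ^ p) * (c₀ * (δ₁ * (2⁻¹:ℝ) ^ k)) ^ (2+p))
    = (w / δ₁ * 2 * c₁ * Q ^ p * c₀ ^ (2+p) * δ₁ ^ 2) * (2⁻¹:ℝ) ^ k := by
  have h2k : ((2:ℝ)⁻¹) ^ k ≠ 0 := by positivity
  rw [div_pow, mul_pow, mul_pow, mul_pow, pow_succ]
  field_simp
  ring

/-- finiteness of `∫_{B(δ₁)} ω(d(Y))/d(Y) dY` (Lemma 5.2 of the paper). -/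
theorem integral_modulus_finite {m : ℕ} (hm : 3 ≤ m)
    (K : Set (EuclideanSpace ℝ (Fin m))) (hK : IsCompact K)
    (c₀ c₁ : ℝ) (Z : ℝ → Finset (EuclideanSpace ℝ (Fin m)))
    (hA : ConditionA m K c₀ c₁ Z)
    (ω : ℝ → ℝ) (hω : IsContinuityModulus ω)
    (c : ℝ) (hc : max (2 * c₀) c₁ < c)
    (δ₁ : ℝ) (hδ₁ : 0 < δ₁) :
    (∫⁻ Y in (⋃ z ∈ Z δ₁, Metric.ball z (c * δ₁)),
      ENNReal.ofReal (ω (Metric.infDist Y K) / Metric.infDist Y K)) < ⊤ := by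
  classical
  obtain ⟨hc₀, hc₁, hZ⟩ := hA
  obtain ⟨hωpos, hωmono, -, -, hωdiv⟩ := hω
  have hcpos : 0 < c := lt_of_lt_of_le hc₁ ((le_max_right _ _).trans hc.le)
  rcases K.eq_empty_or_nonempty with rfl | hKne
  · have hZe : Z δ₁ = ∅ := by
      have h := (hZ δ₁ hδ₁).1
      simpa [Set.subset_empty_iff, Finset.coe_eq_empty] using h
    simp [hZe]
  obtain ⟨X₀, hX₀⟩ := hKne
  obtain ⟨R₁, hR₁⟩ := (isBounded_iff_subset_closedBall X₀).1 hK.isBounded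
  have hR₁0 : 0 ≤ R₁ := by simpa using hR₁ hX₀
  set d : EuclideanSpace ℝ (Fin m) → ℝ := fun Y => Metric.infDist Y K with hdd
  have hdcont : Continuous d := Metric.continuous_infDist_pt K
  have hdmeas : Measurable d := hdcont.measurable
  set R₀ : ℝ := R₁ + (c + 1) * δ₁ with hR₀def
  have hδ₁R₀ : δ₁ ≤ R₀ := by nlinarith
  set BB := Metric.closedBall X₀ R₀ with hBBdef
  have hBsub : (⋃ z ∈ Z δ₁, Metric.ball z (c * δ₁)) ⊆ BB := by
    intro Y hY
    simp only [Set.mem_iUnion] at hY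
    obtain ⟨z, hz, hYz⟩ := hY
    have hzK : z ∈ K := (hZ δ₁ hδ₁).1 hz
    have h1 : dist z X₀ ≤ R₁ := hR₁ hzK
    have h2 : dist Y z < c * δ₁ := mem_ball.mp hYz
    have h3 : dist Y X₀ ≤ dist Y z + dist z X₀ := dist_triangle _ _ _
    simp only [hBBdef, mem_closedBall]
    nlinarith
  set δk : ℕ → ℝ := fun k => δ₁ * (2⁻¹ : ℝ) ^ k with hδkdef
  have hδkpos : ∀ k, 0 < δk k := fun k => by
    simp only [hδkdef]; positivity
  have hδkle : ∀ k, δk k ≤ δ₁ := by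
    intro k
    have h1 : ((2:ℝ)⁻¹) ^ k ≤ 1 := pow_le_one₀ (by norm_num) (by norm_num)
    simp only [hδkdef]
    nlinarith
  set A : Set (EuclideanSpace ℝ (Fin m)) := BB ∩ {Y | δ₁ ≤ d Y} with hAdef
  set N : Set (EuclideanSpace ℝ (Fin m)) := {Y | d Y = 0} with hNdef
  set T : ℕ → Set (EuclideanSpace ℝ (Fin m)) :=
    fun k => BB ∩ {Y | δk (k+1) ≤ d Y ∧ d Y < δk k} with hTdef
  set f : EuclideanSpace ℝ (Fin m) → ℝ≥0∞ :=
    fun Y => ENNReal.ofReal (ω (d Y) / d Y) with hfdef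
  have hcover : (⋃ z ∈ Z δ₁, Metric.ball z (c * δ₁)) ⊆ A ∪ (N ∪ ⋃ k, T k) := by
    intro Y hY
    have hYBB := hBsub hY
    rcases le_or_gt δ₁ (d Y) with h1 | h1
    · exact Or.inl ⟨hYBB, h1⟩
    rcases eq_or_lt_of_le (Metric.infDist_nonneg : 0 ≤ d Y) with h0 | h0
    · exact Or.inr (Or.inl h0.symm)
    refine Or.inr (Or.inr ?_)
    have hex : ∃ n : ℕ, δk n ≤ d Y := by
      obtain ⟨n, hn⟩ := exists_pow_lt_of_lt_one (div_pos h0 hδ₁) (by norm_num : (2:ℝ)⁻¹ < 1)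
      refine ⟨n, ?_⟩
      have := (lt_div_iff₀ hδ₁).1 hn
      simp only [hδkdef]
      nlinarith
    set n₀ := Nat.find hex with hn₀
    have hspec : δk n₀ ≤ d Y := Nat.find_spec hex
    have hn₀pos : n₀ ≠ 0 := by
      intro h
      rw [h] at hspec
      simp only [hδkdef, pow_zero, mul_one] at hspec
      exact absurd hspec (not_le.2 h1)
    obtain ⟨k, hk⟩ := Nat.exists_eq_succ_of_ne_zero hn₀pos
    have hmin : ¬ δk k ≤ d Y := Nat.find_min hex (by omega)
    simp only [Set.mem_iUnion]
    exact ⟨k, hYBB, by rw [hk] at hspec; exact hspec, not_le.1 hmin⟩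
  have hmeasA : MeasurableSet A :=
    measurableSet_closedBall.inter (measurableSet_le measurable_const hdmeas)
  have hmeasN : MeasurableSet N := hdmeas (measurableSet_singleton 0)
  have hmeasT : ∀ k, MeasurableSet (T k) := fun k =>
    measurableSet_closedBall.inter
      ((measurableSet_le measurable_const hdmeas).inter
        (measurableSet_lt hdmeas measurable_const))
  have hIN : ∫⁻ Y in N, f Y = 0 := by
    have h : ∫⁻ Y in N, f Y = ∫⁻ _ in N, (0:ℝ≥0∞) :=
      setLIntegral_congr_fun hmeasN (fun Y hY => by
        have hY0 : d Y = 0 := hY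
        simp only [hfdef, hY0, div_zero, ENNReal.ofReal_zero])
    simpa using h
  have hIA : ∫⁻ Y in A, f Y ≤ ENNReal.ofReal (ω δ₁ / δ₁) * volume BB := by
    calc ∫⁻ Y in A, f Y ≤ ∫⁻ _ in A, ENNReal.ofReal (ω δ₁ / δ₁) :=
          setLIntegral_mono' hmeasA fun Y hY =>
            ENNReal.ofReal_le_ofReal (hωdiv δ₁ (d Y) hδ₁ hY.2)
      _ = ENNReal.ofReal (ω δ₁ / δ₁) * volume A := setLIntegral_const _ _
      _ ≤ _ := mul_le_mul_right (measure_mono Set.inter_subset_left) _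
  -- constants
  set Q : ℝ := R₀ + c₀ * δ₁ with hQdef
  set V1 := volume (Metric.ball (0 : EuclideanSpace ℝ (Fin m)) 1) with hV1def
  have hV1top : V1 < ⊤ := measure_ball_lt_top
  set A0 : ℝ := ω δ₁ / δ₁ with hA0def
  have hωδ₁ : 0 < ω δ₁ := hωpos δ₁ hδ₁
  have hA0pos : 0 < A0 := div_pos hωδ₁ hδ₁
  obtain ⟨p, hp⟩ : ∃ p, m = 2 + p := ⟨m - 2, by omega⟩
  have hm2 : m - 2 = p := by omega
  have hQpos : 0 < Q := by positivity
  set C : ℝ := A0 * 2 * c₁ * Q ^ p * c₀ ^ (2 + p) * δ₁ ^ 2 with hCdef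
  have hTbound : ∀ k : ℕ, ∫⁻ Y in T k, f Y
      ≤ ENNReal.ofReal C * V1 * ((2:ℝ≥0∞)⁻¹) ^ k := by
    intro k
    have hδkk := hδkpos k
    have hδk1 := hδkpos (k+1)
    set F := (Z (δk k)).filter (fun z => z ∈ Metric.closedBall X₀ (R₀ + c₀ * δk k)) with hFdef
    have hRk : δk k ≤ R₀ + c₀ * δk k := by nlinarith [hδkle k]
    have hcard : ((F.card : ℝ)) ≤ c₁ * ((R₀ + c₀ * δk k) / δk k) ^ (m - 2) := by
      have h := (hZ (δk k) hδkk).2.2.2 (R₀ + c₀ * δk k) hRk X₀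
      have he : ((Z (δk k) : Set _) ∩ Metric.closedBall X₀ (R₀ + c₀ * δk k))
          = (F : Set _) := by
        ext z
        simp only [hFdef, Finset.coe_filter, Set.mem_inter_iff, Finset.mem_coe,
          Set.mem_setOf_eq]
      rw [he, Set.ncard_coe_finset] at h
      exact h
    have hcover2 : T k ⊆ ⋃ z ∈ F, Metric.closedBall z (c₀ * δk k) := by
      intro Y hY
      obtain ⟨hYBB, hY1, hY2⟩ := hY
      have hYth : Y ∈ Metric.thickening (δk k) K :=
        (Metric.mem_thickening_iff_infDist_lt ⟨X₀, hX₀⟩).2 hY2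
      have h := (hZ (δk k) hδkk).2.2.1 hYth
      simp only [Set.mem_iUnion] at h ⊢
      obtain ⟨z, hz, hYz⟩ := h
      refine ⟨z, ?_, hYz⟩
      rw [hFdef, Finset.mem_filter]
      refine ⟨hz, ?_⟩
      rw [mem_closedBall]
      have h1 : dist z Y ≤ c₀ * δk k := by rw [dist_comm]; exact mem_closedBall.mp hYz
      have h2 : dist Y X₀ ≤ R₀ := hYBB
      calc dist z X₀ ≤ dist z Y + dist Y X₀ := dist_triangle _ _ _
        _ ≤ c₀ * δk k + R₀ := add_le_add h1 h2
        _ = R₀ + c₀ * δk k := by ring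
    have hμT : volume (T k) ≤ (F.card : ℝ≥0∞) * (ENNReal.ofReal ((c₀ * δk k) ^ m) * V1) := by
      calc volume (T k) ≤ volume (⋃ z ∈ F, Metric.closedBall z (c₀ * δk k)) :=
            measure_mono hcover2
        _ ≤ ∑ z ∈ F, volume (Metric.closedBall z (c₀ * δk k)) :=
            measure_biUnion_finset_le _ _
        _ = ∑ _z ∈ F, ENNReal.ofReal ((c₀ * δk k) ^ m) * V1 := by
            refine Finset.sum_congr rfl fun z _ => ?_
            rw [Measure.addHaar_closedBall volume z (by positivity),
              finrank_euclideanSpace_fin]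
        _ = (F.card : ℝ≥0∞) * (ENNReal.ofReal ((c₀ * δk k) ^ m) * V1) := by
            rw [Finset.sum_const, nsmul_eq_mul]
    have hpt : ∫⁻ Y in T k, f Y
        ≤ ENNReal.ofReal (ω (δk (k+1)) / δk (k+1)) * volume (T k) := by
      calc ∫⁻ Y in T k, f Y ≤ ∫⁻ _ in T k, ENNReal.ofReal (ω (δk (k+1)) / δk (k+1)) :=
            setLIntegral_mono' (hmeasT k) fun Y hY =>
              ENNReal.ofReal_le_ofReal (hωdiv (δk (k+1)) (d Y) hδk1 hY.2.1)
        _ = _ := setLIntegral_const _ _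
    -- real-number bound
    have ha0 : 0 ≤ ω (δk (k+1)) / δk (k+1) := le_of_lt (div_pos (hωpos _ hδk1) hδk1)
    have hb0 : (0:ℝ) ≤ (c₀ * δk k) ^ m := by positivity
    have key : (ω (δk (k+1)) / δk (k+1)) * ((F.card : ℝ) * (c₀ * δk k) ^ m)
        ≤ C * (2⁻¹:ℝ) ^ k := by
      have ha : ω (δk (k+1)) / δk (k+1) ≤ ω δ₁ / δk (k+1) := by
        gcongr
        exact hωmono _ _ hδk1 (hδkle _)
      have hn2 : (F.card : ℝ) ≤ c₁ * (Q / δk k) ^ p := by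
        rw [← hm2]
        refine hcard.trans ?_
        have hnum : R₀ + c₀ * δk k ≤ Q := by
          simp only [hQdef]
          nlinarith [hδkle k]
        have hbase : (R₀ + c₀ * δk k) / δk k ≤ Q / δk k := by
          apply div_le_div_of_nonneg_right hnum hδkk.le
        refine mul_le_mul_of_nonneg_left (pow_le_pow_left₀ ?_ hbase _) hc₁.le
        exact le_of_lt (div_pos (lt_of_lt_of_le hδkk hRk) hδkk)
      calc (ω (δk (k+1)) / δk (k+1)) * ((F.card : ℝ) * (c₀ * δk k) ^ m)
          ≤ (ω δ₁ / δk (k+1)) * ((c₁ * (Q / δk k) ^ p) * (c₀ * δk k) ^ m) := by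
            refine mul_le_mul ha (mul_le_mul_of_nonneg_right hn2 hb0)
              (mul_nonneg (Nat.cast_nonneg _) hb0) (le_of_lt (div_pos hωδ₁ hδk1))
        _ = C * (2⁻¹:ℝ) ^ k := by
            rw [show m = 2 + p from hp]
            simp only [hCdef, hA0def, hδkdef]
            exact aux_geom_eq (ω δ₁) δ₁ c₁ Q c₀ p k hδ₁.ne'
    calc ∫⁻ Y in T k, f Y
        ≤ ENNReal.ofReal (ω (δk (k+1)) / δk (k+1)) * volume (T k) := hpt
      _ ≤ ENNReal.ofReal (ω (δk (k+1)) / δk (k+1)) *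
            ((F.card : ℝ≥0∞) * (ENNReal.ofReal ((c₀ * δk k) ^ m) * V1)) :=
          mul_le_mul_right hμT _
      _ = ENNReal.ofReal ((ω (δk (k+1)) / δk (k+1)) * ((F.card : ℝ) * (c₀ * δk k) ^ m))
            * V1 := by
          rw [ENNReal.ofReal_mul ha0, ENNReal.ofReal_mul (Nat.cast_nonneg _),
            ENNReal.ofReal_natCast]
          ring
      _ ≤ ENNReal.ofReal (C * (2⁻¹:ℝ) ^ k) * V1 :=
          mul_le_mul_left (ENNReal.ofReal_le_ofReal key) _
      _ = ENNReal.ofReal C * V1 * ((2:ℝ≥0∞)⁻¹) ^ k := by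
          rw [ENNReal.ofReal_mul (by positivity), ENNReal.ofReal_pow (by norm_num)]
          rw [show ENNReal.ofReal (2⁻¹:ℝ) = (2:ℝ≥0∞)⁻¹ by
            rw [ENNReal.ofReal_inv_of_pos (by norm_num)]; norm_num]
          ring
  -- put everything together
  have hsum : ∑' k, ∫⁻ Y in T k, f Y
      ≤ ENNReal.ofReal C * V1 * (1 - (2:ℝ≥0∞)⁻¹)⁻¹ := by
    calc ∑' k, ∫⁻ Y in T k, f Y
        ≤ ∑' k, ENNReal.ofReal C * V1 * ((2:ℝ≥0∞)⁻¹) ^ k := ENNReal.tsum_le_tsum hTbound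
      _ = ENNReal.ofReal C * V1 * ∑' k, ((2:ℝ≥0∞)⁻¹) ^ k := ENNReal.tsum_mul_left
      _ = _ := by rw [ENNReal.tsum_geometric]
  have hfin2 : ENNReal.ofReal C * V1 * (1 - (2:ℝ≥0∞)⁻¹)⁻¹ < ⊤ := by
    have h12 : (1 - (2:ℝ≥0∞)⁻¹) = 2⁻¹ := by
      rw [ENNReal.one_sub_inv_two]
    rw [h12, inv_inv]
    exact ENNReal.mul_lt_top (ENNReal.mul_lt_top ENNReal.ofReal_lt_top hV1top) (by norm_num)
  calc ∫⁻ Y in (⋃ z ∈ Z δ₁, Metric.ball z (c * δ₁)), f Y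
      ≤ ∫⁻ Y in A ∪ (N ∪ ⋃ k, T k), f Y := lintegral_mono_set hcover
    _ ≤ (∫⁻ Y in A, f Y) + ∫⁻ Y in N ∪ ⋃ k, T k, f Y := lintegral_union_le _ _ _
    _ ≤ (∫⁻ Y in A, f Y) + ((∫⁻ Y in N, f Y) + ∫⁻ Y in ⋃ k, T k, f Y) :=
        by gcongr; exact lintegral_union_le _ _ _
    _ ≤ (∫⁻ Y in A, f Y) + ((∫⁻ Y in N, f Y) + ∑' k, ∫⁻ Y in T k, f Y) :=
        by gcongr; exact lintegral_iUnion_le _ _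
    _ < ⊤ := by
        rw [hIN, zero_add]
        refine ENNReal.add_lt_top.2 ⟨lt_of_le_of_lt hIA ?_, lt_of_le_of_lt hsum hfin2⟩
        exact ENNReal.mul_lt_top ENNReal.ofReal_lt_top measure_closedBall_lt_top
end
end

section
/- Let m ≥ 3, let K ⊂ ℝ^m be a compact set satisfying Condition A with constants c₀, c₁, let ω be a continuity modulus, fix c > max(2c₀, c₁), and let B(δ₁) be the union of the open balls of radius cδ₁ centered at the points of Z(δ₁). Then ∫_{B(δ₁)} ω(d(Y))/d(Y) dY → 0 as δ₁ → 0⁺, where the integrand is interpreted as 0 at points of K. -/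
open MeasureTheory Metric Set Filter

noncomputable section

open scoped ENNReal

/-- Corollary 5.3 of the paper: the integral
`∫_{B(δ₁)} ω(d(Y))/d(Y) dY` tends to `0` as `δ₁ → 0⁺`. -/
theorem integral_modulus_tendsto_zero {m : ℕ} (hm : 3 ≤ m)
    (K : Set (EuclideanSpace ℝ (Fin m))) (hK : IsCompact K)
    (c₀ c₁ : ℝ) (Z : ℝ → Finset (EuclideanSpace ℝ (Fin m)))
    (hA : ConditionA m K c₀ c₁ Z)
    (ω : ℝ → ℝ) (hω : IsContinuityModulus ω)
    (c : ℝ) (hc : max (2 * c₀) c₁ < c) :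
    Filter.Tendsto
      (fun δ₁ : ℝ => ∫⁻ Y in (⋃ z ∈ Z δ₁, Metric.ball z (c * δ₁)),
        ENNReal.ofReal (ω (Metric.infDist Y K) / Metric.infDist Y K))
      (nhdsWithin 0 (Set.Ioi (0:ℝ))) (nhds 0) := by
  classical
  obtain ⟨hc₀, hc₁, hZ⟩ := hA
  obtain ⟨hωpos, hωmono, -, -, -⟩ := hω
  have hcpos : 0 < c := lt_of_le_of_lt (le_of_lt (by positivity : (0:ℝ) < 2 * c₀))
    (lt_of_le_of_lt (le_max_left _ _) hc)
  rcases K.eq_empty_or_nonempty with hKe | hKne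
  · -- K empty: the integral is eventually 0
    have hev : ∀ᶠ δ in nhdsWithin (0:ℝ) (Set.Ioi 0),
        (∫⁻ Y in (⋃ z ∈ Z δ, Metric.ball z (c * δ)),
          ENNReal.ofReal (ω (Metric.infDist Y K) / Metric.infDist Y K)) = 0 := by
      filter_upwards [self_mem_nhdsWithin] with δ hδ
      have h1 := (hZ δ hδ).1
      rw [hKe, Set.subset_empty_iff] at h1
      have : Z δ = ∅ := by exact_mod_cast Finset.coe_eq_empty.mp h1
      simp [this]
    refine Tendsto.congr' ?_ tendsto_const_nhds
    exact hev.mono fun δ h => h.symm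
  -- K nonempty
  obtain ⟨r, hKr⟩ := hK.isBounded.subset_closedBall (0 : EuclideanSpace ℝ (Fin m))
  set R₀ : ℝ := max r 1 with hR₀def
  have hR₀pos : (0:ℝ) < R₀ := lt_of_lt_of_le one_pos (le_max_right _ _)
  have hKR : K ⊆ Metric.closedBall (0 : EuclideanSpace ℝ (Fin m)) R₀ :=
    hKr.trans (Metric.closedBall_subset_closedBall (le_max_left _ _))
  set vB := volume (Metric.closedBall (0 : EuclideanSpace ℝ (Fin m)) 1) with hvBdef
  have hvB_ne : vB ≠ ⊤ := measure_closedBall_lt_top.ne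
  set A : ℝ := c₁ * c₀ ^ m * R₀ ^ (m - 2) with hAdef
  have hApos : 0 < A := by positivity
  set d : EuclideanSpace ℝ (Fin m) → ℝ := fun Y => Metric.infDist Y K with hddef
  have hd_cont : Continuous d := Metric.continuous_infDist_pt K
  -- volume of thickenings
  have volThick : ∀ t : ℝ, 0 < t → t ≤ R₀ →
      volume (Metric.thickening t K) ≤ ENNReal.ofReal (A * t ^ 2) * vB := by
    intro t ht htR
    obtain ⟨hZK, -, hcover, hcount⟩ := hZ t ht
    have hcard : ((Z t).card : ℝ) ≤ c₁ * (R₀ / t) ^ (m - 2) := by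
      have h1 := hcount R₀ htR 0
      have h2 : (Z t : Set (EuclideanSpace ℝ (Fin m))) ∩
          Metric.closedBall (0 : EuclideanSpace ℝ (Fin m)) R₀ = (Z t : Set _) :=
        Set.inter_eq_left.mpr (hZK.trans hKR)
      rwa [h2, Set.ncard_coe_finset] at h1
    have hballvol : ∀ z : EuclideanSpace ℝ (Fin m),
        volume (Metric.closedBall z (c₀ * t)) = ENNReal.ofReal ((c₀ * t) ^ m) * vB := by
      intro z
      rw [Measure.addHaar_closedBall' volume z (by positivity), finrank_euclideanSpace_fin]
    calc volume (Metric.thickening t K)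
        ≤ volume (⋃ z ∈ Z t, Metric.closedBall z (c₀ * t)) := measure_mono hcover
      _ ≤ ∑ z ∈ Z t, volume (Metric.closedBall z (c₀ * t)) :=
          measure_biUnion_finset_le _ _
      _ = ((Z t).card : ℝ≥0∞) * (ENNReal.ofReal ((c₀ * t) ^ m) * vB) := by
          simp [hballvol, Finset.sum_const, mul_comm]
      _ ≤ ENNReal.ofReal (c₁ * (R₀ / t) ^ (m - 2)) * (ENNReal.ofReal ((c₀ * t) ^ m) * vB) := by
          gcongr
          rw [← ENNReal.ofReal_natCast]
          exact ENNReal.ofReal_le_ofReal hcard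
      _ = ENNReal.ofReal (A * t ^ 2) * vB := by
          rw [← mul_assoc, ← ENNReal.ofReal_mul (by positivity)]
          congr 2
          obtain ⟨k, hk⟩ : ∃ k, m = k + 2 := ⟨m - 2, by omega⟩
          have hk2 : m - 2 = k := by omega
          rw [hAdef, hk]
          simp only [Nat.add_sub_cancel]
          field_simp
          have htk : t ^ k * t⁻¹ ^ k = 1 := by rw [← mul_pow, mul_inv_cancel₀ ht.ne', one_pow]
          linear_combination (R₀ ^ k * t ^ 2 * c₀ ^ 2 * c₀ ^ k) * htk
  set M : ℝ := ω R₀ with hMdef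
  have hMpos : 0 < M := hωpos R₀ hR₀pos
  -- the integrand
  set f : EuclideanSpace ℝ (Fin m) → ℝ≥0∞ :=
    fun Y => ENNReal.ofReal (ω (d Y) / d Y) with hfdef
  -- layer estimate
  have layerBound : ∀ s : ℝ, 0 < s → 2 * s ≤ R₀ →
      (∫⁻ Y in Metric.thickening s K, f Y) ≤ ENNReal.ofReal (16 * M * A * s) * vB := by
    intro s hs hsR
    have hsR' : s ≤ R₀ := by linarith
    set S₀ : Set (EuclideanSpace ℝ (Fin m)) := d ⁻¹' {0} with hS₀def
    set Aset : ℕ → Set (EuclideanSpace ℝ (Fin m)) :=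
      fun j => {Y | s / 2 ^ (j + 1) < d Y ∧ d Y ≤ s / 2 ^ j} with hAsetdef
    have hcov : Metric.thickening s K ⊆ S₀ ∪ ⋃ j, Aset j := by
      intro Y hY
      rcases eq_or_lt_of_le (Metric.infDist_nonneg : 0 ≤ d Y) with h0 | h0
      · exact Or.inl (by simpa [hS₀def] using h0.symm)
      · right
        have hds : d Y < s := (Metric.mem_thickening_iff_infDist_lt hKne).1 hY
        have hP : ∃ n : ℕ, s / 2 ^ (n + 1) < d Y := by
          obtain ⟨n, hn⟩ := exists_pow_lt_of_lt_one (x := d Y / s) (y := (1:ℝ)/2)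
            (by positivity) (by norm_num)
          have hns : ((1:ℝ)/2) ^ n * s < d Y := (lt_div_iff₀ hs).mp hn
          have heq : ((1:ℝ)/2) ^ n * s = s / 2 ^ n := by
            rw [div_pow, one_pow]; ring
          have hle : s / 2 ^ (n + 1) ≤ s / 2 ^ n :=
            div_le_div_of_nonneg_left hs.le (by positivity)
              (pow_le_pow_right₀ one_le_two (Nat.le_succ n))
          exact ⟨n, lt_of_le_of_lt hle (heq ▸ hns)⟩
        refine Set.mem_iUnion.mpr ⟨Nat.find hP, Nat.find_spec hP, ?_⟩
        rcases Nat.eq_zero_or_pos (Nat.find hP) with hj0 | hjpos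
        · rw [hj0]; simpa using hds.le
        · obtain ⟨j', hj'⟩ := Nat.exists_eq_succ_of_ne_zero hjpos.ne'
          have hmin := Nat.find_min hP (m := j') (by omega)
          push_neg at hmin
          rw [hj']
          simpa using hmin
    have hAmeas : ∀ j, MeasurableSet (Aset j) := by
      intro j
      exact (measurableSet_lt measurable_const hd_cont.measurable).inter
        (measurableSet_le hd_cont.measurable measurable_const)
    -- integral over S₀ vanishes
    have hS₀int : (∫⁻ Y in S₀, f Y) = 0 := by
      have : ∀ Y ∈ S₀, f Y = 0 := by
        intro Y hY
        have : d Y = 0 := hY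
        simp [hfdef, this]
      calc (∫⁻ Y in S₀, f Y) = ∫⁻ _ in S₀, 0 := by
            apply setLIntegral_congr_fun (hd_cont.measurable (measurableSet_singleton 0))
            exact this
        _ = 0 := lintegral_zero
    -- per-layer estimate
    have hlayer : ∀ j : ℕ, (∫⁻ Y in Aset j, f Y) ≤
        ENNReal.ofReal (8 * M * A * s) * ENNReal.ofReal (1/2) ^ j * vB := by
      intro j
      have h2j : (0:ℝ) < 2 ^ j := by positivity
      have hthick : Aset j ⊆ Metric.thickening (2 * s / 2 ^ j) K := by
        intro Y hY
        apply (Metric.mem_thickening_iff_infDist_lt hKne).2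
        calc Metric.infDist Y K ≤ s / 2 ^ j := hY.2
          _ < 2 * s / 2 ^ j := by
              apply div_lt_div_of_pos_right (by linarith) h2j
      have hvol : volume (Aset j) ≤ ENNReal.ofReal (A * (2 * s / 2 ^ j) ^ 2) * vB := by
        refine le_trans (measure_mono hthick) (volThick _ (by positivity) ?_)
        calc 2 * s / 2 ^ j ≤ 2 * s / 1 := by
              apply div_le_div_of_nonneg_left (by linarith) one_pos (one_le_pow₀ one_le_two)
          _ = 2 * s := by ring
          _ ≤ R₀ := hsR
      have hbound : ∀ Y ∈ Aset j, f Y ≤ ENNReal.ofReal (M * 2 ^ (j + 1) / s) := by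
        intro Y hY
        obtain ⟨h1, h2⟩ := hY
        have hdpos : 0 < d Y := lt_trans (by positivity) h1
        apply ENNReal.ofReal_le_ofReal
        have hω1 : ω (d Y) ≤ M := by
          apply hωmono (d Y) R₀ hdpos
          calc d Y ≤ s / 2 ^ j := h2
            _ ≤ s / 1 := by
                apply div_le_div_of_nonneg_left hs.le one_pos (one_le_pow₀ one_le_two)
            _ = s := div_one s
            _ ≤ R₀ := hsR'
        calc ω (d Y) / d Y ≤ M / d Y := by gcongr
          _ ≤ M / (s / 2 ^ (j + 1)) := by gcongr
          _ = M * 2 ^ (j + 1) / s := by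
              field_simp
      calc (∫⁻ Y in Aset j, f Y)
          ≤ ∫⁻ _ in Aset j, ENNReal.ofReal (M * 2 ^ (j + 1) / s) :=
            setLIntegral_mono measurable_const hbound
        _ = ENNReal.ofReal (M * 2 ^ (j + 1) / s) * volume (Aset j) := setLIntegral_const _ _
        _ ≤ ENNReal.ofReal (M * 2 ^ (j + 1) / s) *
              (ENNReal.ofReal (A * (2 * s / 2 ^ j) ^ 2) * vB) := by gcongr
        _ = ENNReal.ofReal (M * 2 ^ (j + 1) / s * (A * (2 * s / 2 ^ j) ^ 2)) * vB := by
            rw [← mul_assoc, ← ENNReal.ofReal_mul (by positivity)]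
        _ = ENNReal.ofReal (8 * M * A * s * (1/2) ^ j) * vB := by
            congr 1
            rw [div_pow, mul_pow, div_pow, one_pow]
            field_simp
            congr 1
            rw [div_eq_div_iff (by positivity) (by positivity)]
            ring
        _ = ENNReal.ofReal (8 * M * A * s) * ENNReal.ofReal (1/2) ^ j * vB := by
            rw [ENNReal.ofReal_mul (by positivity), ENNReal.ofReal_pow (by norm_num)]
    -- sum it up
    have hgeom : (∑' j : ℕ, ENNReal.ofReal ((1:ℝ)/2) ^ j) = 2 := by
      rw [ENNReal.tsum_geometric]
      have : ENNReal.ofReal ((1:ℝ)/2) = 2⁻¹ := by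
        rw [ENNReal.ofReal_div_of_pos two_pos]
        simp
      rw [this]
      rw [ENNReal.one_sub_inv_two]
      simp
    calc (∫⁻ Y in Metric.thickening s K, f Y)
        ≤ ∫⁻ Y in S₀ ∪ ⋃ j, Aset j, f Y := lintegral_mono_set hcov
      _ ≤ (∫⁻ Y in S₀, f Y) + ∫⁻ Y in ⋃ j, Aset j, f Y := lintegral_union_le _ _ _
      _ = ∫⁻ Y in ⋃ j, Aset j, f Y := by rw [hS₀int, zero_add]
      _ ≤ ∑' j : ℕ, ∫⁻ Y in Aset j, f Y := lintegral_iUnion_le _ _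
      _ ≤ ∑' j : ℕ, ENNReal.ofReal (8 * M * A * s) * ENNReal.ofReal (1/2) ^ j * vB :=
          ENNReal.tsum_le_tsum hlayer
      _ = ENNReal.ofReal (8 * M * A * s) * 2 * vB := by
          rw [ENNReal.tsum_mul_right, ENNReal.tsum_mul_left, hgeom]
      _ = ENNReal.ofReal (16 * M * A * s) * vB := by
          congr 1
          rw [show (2:ℝ≥0∞) = ENNReal.ofReal 2 by simp, ← ENNReal.ofReal_mul (by positivity)]
          congr 1
          ring
  -- eventual bound on the integral over B(δ)
  have key : ∀ᶠ δ in nhdsWithin (0:ℝ) (Set.Ioi 0),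
      (∫⁻ Y in (⋃ z ∈ Z δ, Metric.ball z (c * δ)),
        ENNReal.ofReal (ω (Metric.infDist Y K) / Metric.infDist Y K))
      ≤ ENNReal.ofReal (16 * M * A * (c * δ)) * vB := by
    have hmem : Set.Ioo (0:ℝ) (R₀ / (2 * c)) ∈ nhdsWithin (0:ℝ) (Set.Ioi 0) :=
      Ioo_mem_nhdsGT (by positivity)
    filter_upwards [hmem] with δ hδ
    obtain ⟨hδpos, hδlt⟩ := hδ
    have hsub : (⋃ z ∈ Z δ, Metric.ball z (c * δ)) ⊆ Metric.thickening (c * δ) K := by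
      intro Y hY
      simp only [Set.mem_iUnion] at hY
      obtain ⟨z, hz, hYz⟩ := hY
      exact Metric.mem_thickening_iff.2 ⟨z, (hZ δ hδpos).1 hz, Metric.mem_ball.mp hYz⟩
    calc (∫⁻ Y in (⋃ z ∈ Z δ, Metric.ball z (c * δ)),
          ENNReal.ofReal (ω (Metric.infDist Y K) / Metric.infDist Y K))
        ≤ ∫⁻ Y in Metric.thickening (c * δ) K, f Y := lintegral_mono_set hsub
      _ ≤ ENNReal.ofReal (16 * M * A * (c * δ)) * vB := by
          apply layerBound (c * δ) (by positivity)
          have : δ * (2 * c) < R₀ := (lt_div_iff₀ (by positivity)).mp hδlt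
          linarith
  -- squeeze
  have hupper : Tendsto (fun δ : ℝ => ENNReal.ofReal (16 * M * A * (c * δ)) * vB)
      (nhdsWithin (0:ℝ) (Set.Ioi 0)) (nhds 0) := by
    have h1 : Tendsto (fun δ : ℝ => 16 * M * A * (c * δ)) (nhdsWithin (0:ℝ) (Set.Ioi 0))
        (nhds 0) := by
      have hcont : Continuous fun δ : ℝ => 16 * M * A * (c * δ) :=
        continuous_const.mul (continuous_const.mul continuous_id)
      have h := (hcont.tendsto 0).mono_left (nhdsWithin_le_nhds :
        nhdsWithin (0:ℝ) (Set.Ioi 0) ≤ nhds 0)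
      simpa using h
    have h2 : Tendsto (fun δ : ℝ => ENNReal.ofReal (16 * M * A * (c * δ)))
        (nhdsWithin (0:ℝ) (Set.Ioi 0)) (nhds 0) := by
      have := ENNReal.tendsto_ofReal h1
      simpa using this
    have h3 := ENNReal.Tendsto.mul_const h2 (Or.inr hvB_ne)
    simpa using h3
  exact tendsto_of_tendsto_of_tendsto_of_le_of_le' tendsto_const_nhds hupper
    (Eventually.of_forall fun δ => zero_le) key
end
end

section
/- Let m ≥ 3, let K ⊂ ℝ^m be a compact set satisfying Condition A with constants c₀, c₁, let ω be a continuity modulus, fix c > max(2c₀, c₁), and let B(δ₁) be the union of the open balls of radius cδ₁ centered at the points of Z(δ₁). Then there exists a constant c' > 0 (depending only on K, ω, m and the Condition A constants) such that for every δ₁ > 0, every point X₀ ∈ K and every r ≥ δ₁, one has ∫_{B_r(X₀) ∩ B(δ₁)} ω(d(Y))/d(Y) dY ≤ c' r^{m−2} δ₁ ω(δ₁), where the integrand is interpreted as 0 at points of K. -/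
open MeasureTheory Metric Set Filter
open scoped ENNReal

noncomputable section

/-- Lemma 5.4 of the paper: localized estimate
`∫_{B_r(X₀) ∩ B(δ₁)} ω(d(Y))/d(Y) dY ≤ c' r^{m-2} δ₁ ω(δ₁)` for `X₀ ∈ K`, `r ≥ δ₁`. -/
theorem localized_integral_estimate {m : ℕ} (hm : 3 ≤ m)
    (K : Set (EuclideanSpace ℝ (Fin m))) (hK : IsCompact K)
    (c₀ c₁ : ℝ) (Z : ℝ → Finset (EuclideanSpace ℝ (Fin m)))
    (hA : ConditionA m K c₀ c₁ Z)
    (ω : ℝ → ℝ) (hω : IsContinuityModulus ω)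
    (c : ℝ) (hc : max (2 * c₀) c₁ < c) :
    ∃ c' : ℝ, 0 < c' ∧
      ∀ δ₁ : ℝ, 0 < δ₁ → ∀ X₀ ∈ K, ∀ r : ℝ, δ₁ ≤ r →
        (∫⁻ Y in Metric.ball X₀ r ∩ (⋃ z ∈ Z δ₁, Metric.ball z (c * δ₁)),
          ENNReal.ofReal (ω (Metric.infDist Y K) / Metric.infDist Y K))
          ≤ ENNReal.ofReal (c' * r ^ (m - 2) * δ₁ * ω δ₁) := by
  obtain ⟨hc₀, hc₁, hAZ⟩ := hA
  obtain ⟨hωpos, hωmono, -, -, hωratio⟩ := hω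
  have hcpos : 0 < c := hc₁.trans ((le_max_right _ _).trans_lt hc)
  set d₂ : ℕ := m - 2 with hd₂
  have hm2 : m = d₂ + 2 := by omega
  set V : ℝ≥0∞ := volume (ball (0 : EuclideanSpace ℝ (Fin m)) 1) with hV
  set Vr : ℝ := V.toReal with hVrdef
  have hVne : V ≠ ⊤ := measure_ball_lt_top.ne
  have hVr : 0 < Vr := ENNReal.toReal_pos (measure_ball_pos _ _ one_pos).ne' hVne
  have hVeq : V = ENNReal.ofReal Vr := (ENNReal.ofReal_toReal hVne).symm
  set C : ℝ := max c (1 + c₀ * c) with hCdef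
  have hC0 : 0 < C := hcpos.trans_le (le_max_left _ _)
  -- volume bound for neighborhoods intersected with balls
  have volbound : ∀ δ R : ℝ, 0 < δ → δ ≤ R →
      ∀ (X : EuclideanSpace ℝ (Fin m)) (ρ : ℝ), ρ + c₀ * δ ≤ R →
      volume (ball X ρ ∩ thickening δ K)
        ≤ ENNReal.ofReal (c₁ * (R / δ) ^ d₂ * ((c₀ * δ) ^ m * Vr)) := by
    intro δ R hδ hδR X ρ hρ
    classical
    obtain ⟨hZK, -, hcover, hcount⟩ := hAZ δ hδ
    set F := (Z δ).filter (fun z => z ∈ closedBall X R) with hF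
    have hsub : ball X ρ ∩ thickening δ K ⊆ ⋃ z ∈ F, closedBall z (c₀ * δ) := by
      rintro Y ⟨hY1, hY2⟩
      have hz := hcover hY2
      simp only [mem_iUnion, exists_prop] at hz ⊢
      obtain ⟨z, hzZ, hzY⟩ := hz
      refine ⟨z, ?_, hzY⟩
      have hdY : dist Y z ≤ c₀ * δ := by rwa [mem_closedBall] at hzY
      have hYX : dist Y X < ρ := by rwa [mem_ball] at hY1
      have : dist z X ≤ R := by
        calc dist z X ≤ dist z Y + dist Y X := dist_triangle _ _ _
          _ ≤ c₀ * δ + ρ := add_le_add (by rwa [dist_comm]) hYX.le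
          _ ≤ R := by linarith
      simp [hF, Finset.mem_filter, hzZ, mem_closedBall, this]
    have hcard : ((F.card : ℝ)) ≤ c₁ * (R / δ) ^ d₂ := by
      have := hcount R hδR X
      have heq : ((Z δ : Set (EuclideanSpace ℝ (Fin m))) ∩ closedBall X R).ncard = F.card := by
        rw [← Set.ncard_coe_finset]
        congr 1
        ext z
        simp [hF]
      rw [heq] at this
      exact this
    calc volume (ball X ρ ∩ thickening δ K)
        ≤ volume (⋃ z ∈ F, closedBall z (c₀ * δ)) := measure_mono hsub
      _ ≤ ∑ z ∈ F, volume (closedBall z (c₀ * δ)) := measure_biUnion_finset_le F _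
      _ ≤ ∑ _z ∈ F, (ENNReal.ofReal ((c₀ * δ) ^ m) * V) := by
          refine Finset.sum_le_sum fun z _ => ?_
          rw [Measure.addHaar_closedBall volume z (by positivity), finrank_euclideanSpace_fin]
      _ = (F.card : ℝ≥0∞) * (ENNReal.ofReal ((c₀ * δ) ^ m) * V) := by
          rw [Finset.sum_const, nsmul_eq_mul]
      _ ≤ ENNReal.ofReal (c₁ * (R / δ) ^ d₂) * (ENNReal.ofReal ((c₀ * δ) ^ m)
            * ENNReal.ofReal Vr) := by
          rw [← hVeq]
          refine mul_le_mul_left ?_ _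
          rw [← ENNReal.ofReal_natCast]
          exact ENNReal.ofReal_le_ofReal hcard
      _ = ENNReal.ofReal (c₁ * (R / δ) ^ d₂ * ((c₀ * δ) ^ m * Vr)) := by
          have hRδ : (0:ℝ) ≤ c₁ * (R / δ) ^ d₂ :=
            mul_nonneg hc₁.le (pow_nonneg (div_nonneg (hδ.trans_le hδR).le hδ.le) _)
          rw [← ENNReal.ofReal_mul (by positivity), ← ENNReal.ofReal_mul hRδ]
  -- the constant
  refine ⟨4 * max 1 c * c * c₁ * C ^ d₂ * c₀ ^ m * Vr, by positivity, ?_⟩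
  set c' : ℝ := 4 * max 1 c * c * c₁ * C ^ d₂ * c₀ ^ m * Vr with hc'def
  intro δ₁ hδ₁ X₀ hX₀ r hr
  have hrpos : 0 < r := hδ₁.trans_le hr
  have hKne : K.Nonempty := ⟨X₀, hX₀⟩
  set t : ℕ → ℝ := fun k => c * δ₁ / 2 ^ k with htdef
  have ht0 : ∀ k, 0 < t k := fun k => by positivity
  have htle : ∀ k, t k ≤ c * δ₁ := fun k => by
    apply div_le_self (by positivity) (one_le_pow₀ one_le_two)
  set A : ℕ → Set (EuclideanSpace ℝ (Fin m)) := fun k =>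
    ball X₀ r ∩ {Y | t (k + 1) ≤ infDist Y K ∧ infDist Y K < t k} with hAdef
  set S : Set (EuclideanSpace ℝ (Fin m)) :=
    ball X₀ r ∩ ⋃ z ∈ Z δ₁, ball z (c * δ₁) with hSdef
  set f : EuclideanSpace ℝ (Fin m) → ℝ≥0∞ :=
    fun Y => ENNReal.ofReal (ω (infDist Y K) / infDist Y K) with hfdef
  -- covering of S
  have hcoverS : S ⊆ (S ∩ K) ∪ ⋃ k, A k := by
    intro Y hY
    by_cases hYK : Y ∈ K
    · exact Or.inl ⟨hY, hYK⟩
    · right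
      have hd : 0 < infDist Y K := (hK.isClosed.notMem_iff_infDist_pos hKne).1 hYK
      have hdlt : infDist Y K < c * δ₁ := by
        obtain ⟨-, hY2⟩ := hY
        simp only [mem_iUnion, exists_prop] at hY2
        obtain ⟨z, hz, hzY⟩ := hY2
        have hzK : z ∈ K := (hAZ δ₁ hδ₁).1 hz
        calc infDist Y K ≤ dist Y z := infDist_le_dist_of_mem hzK
          _ < c * δ₁ := by rwa [mem_ball] at hzY
      have hex : ∃ n : ℕ, t n ≤ infDist Y K := by
        obtain ⟨n, hn⟩ := pow_unbounded_of_one_lt (c * δ₁ / infDist Y K) one_lt_two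
        refine ⟨n, ?_⟩
        rw [htdef]
        rw [div_le_iff₀ (by positivity)]
        have := (div_lt_iff₀ hd).1 hn
        nlinarith [hd, pow_pos (zero_lt_two (α := ℝ)) n]
      have hn0 : Nat.find hex ≠ 0 := by
        intro h0
        have := Nat.find_spec hex
        rw [h0] at this
        simp only [htdef, pow_zero, div_one] at this
        linarith
      obtain ⟨k, hk⟩ := Nat.exists_eq_succ_of_ne_zero hn0
      refine mem_iUnion.2 ⟨k, hY.1, ?_, ?_⟩
      · have := Nat.find_spec hex
        rwa [hk] at this
      · have := Nat.find_min hex (m := k) (by omega)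
        exact not_le.1 this
  -- zero integral on K
  have hzero : ∫⁻ Y in S ∩ K, f Y = 0 := by
    have : ∀ Y ∈ S ∩ K, f Y ≤ 0 := by
      intro Y hY
      simp [hfdef, infDist_zero_of_mem hY.2]
    refine le_antisymm ?_ (zero_le)
    refine (setLIntegral_mono measurable_const this).trans ?_
    simp
  -- ω(cδ₁) ≤ max 1 c * ω δ₁
  have hωc : ω (c * δ₁) ≤ max 1 c * ω δ₁ := by
    rcases le_total c 1 with h1 | h1
    · have h2 : ω (c * δ₁) ≤ ω δ₁ :=
        hωmono _ _ (by positivity) (by nlinarith)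
      have := (hωpos δ₁ hδ₁).le
      nlinarith [le_max_left (1:ℝ) c]
    · have h2 := hωratio δ₁ (c * δ₁) hδ₁ (by nlinarith)
      have hcd : 0 < c * δ₁ := by positivity
      have h3 : ω (c * δ₁) ≤ c * ω δ₁ := by
        rw [div_le_div_iff₀ hcd hδ₁] at h2
        nlinarith
      have h5 : c * ω δ₁ ≤ max 1 c * ω δ₁ :=
        mul_le_mul_of_nonneg_right (le_max_right _ _) (hωpos δ₁ hδ₁).le
      linarith
  -- per-piece estimate
  have hterm : ∀ k : ℕ, ∫⁻ Y in A k, f Y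
      ≤ ENNReal.ofReal (c' / 2 * r ^ d₂ * δ₁ * ω δ₁) * 2⁻¹ ^ k := by
    intro k
    have hbound : ∀ Y ∈ A k, f Y ≤ ENNReal.ofReal (ω (c * δ₁) / t (k + 1)) := by
      rintro Y ⟨-, hY1, hY2⟩
      have hd : 0 < infDist Y K := (ht0 (k + 1)).trans_le hY1
      have h1 : ω (infDist Y K) / infDist Y K ≤ ω (t (k + 1)) / t (k + 1) :=
        hωratio _ _ (ht0 (k + 1)) hY1
      have h2 : ω (t (k + 1)) ≤ ω (c * δ₁) := hωmono _ _ (ht0 (k + 1)) (htle (k + 1))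
      have h3 : ω (t (k + 1)) / t (k + 1) ≤ ω (c * δ₁) / t (k + 1) := by
        gcongr
      exact ENNReal.ofReal_le_ofReal (h1.trans h3)
    have hAsub : A k ⊆ ball X₀ r ∩ thickening (t k) K := by
      rintro Y ⟨hY0, -, hY2⟩
      exact ⟨hY0, (mem_thickening_iff_infDist_lt hKne).2 hY2⟩
    have hmeas : volume (A k)
        ≤ ENNReal.ofReal (c₁ * (C * r / t k) ^ d₂ * ((c₀ * t k) ^ m * Vr)) := by
      refine (measure_mono hAsub).trans (volbound (t k) (C * r) (ht0 k) ?_ X₀ r ?_)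
      · have h1 : c * δ₁ ≤ c * r := mul_le_mul_of_nonneg_left hr hcpos.le
        have h2 : c * r ≤ C * r :=
          mul_le_mul_of_nonneg_right (le_max_left c (1 + c₀ * c)) hrpos.le
        linarith [htle k]
      · have h1 : c₀ * t k ≤ c₀ * (c * δ₁) :=
          mul_le_mul_of_nonneg_left (htle k) hc₀.le
        have h2 : (1 + c₀ * c) * r ≤ C * r :=
          mul_le_mul_of_nonneg_right (le_max_right c (1 + c₀ * c)) hrpos.le
        have h2' : (1 + c₀ * c) * r = r + c₀ * (c * r) := by ring
        have h3 : c₀ * (c * δ₁) ≤ c₀ * (c * r) :=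
          mul_le_mul_of_nonneg_left (mul_le_mul_of_nonneg_left hr hcpos.le) hc₀.le
        linarith
    have hc'pos : 0 < c' := by rw [hc'def]; positivity
    have hann : 0 ≤ c' / 2 * r ^ d₂ * δ₁ * ω δ₁ :=
      mul_nonneg (mul_nonneg (mul_nonneg (div_nonneg hc'pos.le (by norm_num))
        (pow_nonneg hrpos.le _)) hδ₁.le) (hωpos δ₁ hδ₁).le
    have hQ : (0:ℝ) ≤ 2 * c₁ * Vr * (C * r) ^ d₂ * c₀ ^ m * c * δ₁ * (1 / 2) ^ k :=
      mul_nonneg (mul_nonneg (mul_nonneg (mul_nonneg (mul_nonneg (mul_nonneg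
        (mul_nonneg (by norm_num) hc₁.le) hVr.le)
        (pow_nonneg (mul_nonneg hC0.le hrpos.le) _)) (pow_nonneg hc₀.le _)) hcpos.le)
        hδ₁.le) (pow_nonneg (by norm_num) _)
    have hcd : (c * δ₁) ≠ 0 := by positivity
    have hL : (ω (c * δ₁) / t (k + 1)) * (c₁ * (C * r / t k) ^ d₂ * ((c₀ * t k) ^ m * Vr))
        = (2 * c₁ * Vr * (C * r) ^ d₂ * c₀ ^ m * c * δ₁ * (1 / 2) ^ k) * ω (c * δ₁) := by
      have hu : t k ≠ 0 := (ht0 k).ne'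
      have ht1 : t (k + 1) = t k / 2 := by simp only [htdef]; ring
      have htk : t k = c * δ₁ * (1 / 2) ^ k := by
        simp only [htdef]; rw [one_div, inv_pow, div_eq_mul_inv]
      have hp : (C * r / t k) ^ d₂ * t k ^ d₂ = (C * r) ^ d₂ := by
        rw [← mul_pow, div_mul_cancel₀ _ hu]
      have hq : ω (c * δ₁) / (t k / 2) * t k ^ 2 = 2 * ω (c * δ₁) * t k := by
        field_simp
      rw [ht1, hm2]
      calc ω (c * δ₁) / (t k / 2) * (c₁ * (C * r / t k) ^ d₂ * ((c₀ * t k) ^ (d₂ + 2) * Vr))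
          = (ω (c * δ₁) / (t k / 2) * t k ^ 2) * c₁ * ((C * r / t k) ^ d₂ * t k ^ d₂)
              * c₀ ^ (d₂ + 2) * Vr := by ring
        _ = _ := by rw [hq, hp, htk]; ring
    have hR : (c' / 2 * r ^ d₂ * δ₁ * ω δ₁) * (1 / 2) ^ k
        = (2 * c₁ * Vr * (C * r) ^ d₂ * c₀ ^ m * c * δ₁ * (1 / 2) ^ k)
          * (max 1 c * ω δ₁) := by
      simp only [hc'def]
      ring
    have hkey : (ω (c * δ₁) / t (k + 1)) * (c₁ * (C * r / t k) ^ d₂ * ((c₀ * t k) ^ m * Vr))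
        ≤ (c' / 2 * r ^ d₂ * δ₁ * ω δ₁) * (1 / 2) ^ k := by
      rw [hL, hR]
      exact mul_le_mul_of_nonneg_left hωc hQ
    calc ∫⁻ Y in A k, f Y
        ≤ ∫⁻ _ in A k, ENNReal.ofReal (ω (c * δ₁) / t (k + 1)) :=
          setLIntegral_mono measurable_const hbound
      _ = ENNReal.ofReal (ω (c * δ₁) / t (k + 1)) * volume (A k) := setLIntegral_const _ _
      _ ≤ ENNReal.ofReal (ω (c * δ₁) / t (k + 1)) *
            ENNReal.ofReal (c₁ * (C * r / t k) ^ d₂ * ((c₀ * t k) ^ m * Vr)) :=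
          mul_le_mul_right hmeas _
      _ = ENNReal.ofReal ((ω (c * δ₁) / t (k + 1)) *
            (c₁ * (C * r / t k) ^ d₂ * ((c₀ * t k) ^ m * Vr))) := by
          rw [← ENNReal.ofReal_mul
            (div_nonneg (hωpos _ (by positivity)).le (ht0 _).le)]
      _ ≤ ENNReal.ofReal ((c' / 2 * r ^ d₂ * δ₁ * ω δ₁) * (1 / 2) ^ k) :=
          ENNReal.ofReal_le_ofReal hkey
      _ = ENNReal.ofReal (c' / 2 * r ^ d₂ * δ₁ * ω δ₁) * 2⁻¹ ^ k := by
          rw [ENNReal.ofReal_mul hann, ENNReal.ofReal_pow (by norm_num),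
            ENNReal.ofReal_div_of_pos two_pos, ENNReal.ofReal_one, ENNReal.ofReal_ofNat,
            one_div]
  have hc'pos : 0 < c' := by rw [hc'def]; positivity
  have hann : 0 ≤ c' / 2 * r ^ d₂ * δ₁ * ω δ₁ :=
    mul_nonneg (mul_nonneg (mul_nonneg (div_nonneg hc'pos.le (by norm_num))
      (pow_nonneg hrpos.le _)) hδ₁.le) (hωpos δ₁ hδ₁).le
  calc ∫⁻ Y in S, f Y
      ≤ ∫⁻ Y in (S ∩ K) ∪ ⋃ k, A k, f Y := lintegral_mono_set hcoverS
    _ ≤ (∫⁻ Y in S ∩ K, f Y) + ∫⁻ Y in ⋃ k, A k, f Y := lintegral_union_le _ _ _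
    _ = ∫⁻ Y in ⋃ k, A k, f Y := by rw [hzero, zero_add]
    _ ≤ ∑' k, ∫⁻ Y in A k, f Y := lintegral_iUnion_le _ _
    _ ≤ ∑' k : ℕ, ENNReal.ofReal (c' / 2 * r ^ d₂ * δ₁ * ω δ₁) * 2⁻¹ ^ k :=
        ENNReal.tsum_le_tsum hterm
    _ = ENNReal.ofReal (c' / 2 * r ^ d₂ * δ₁ * ω δ₁) * (1 - 2⁻¹)⁻¹ := by
        rw [ENNReal.tsum_mul_left, ENNReal.tsum_geometric]
    _ = ENNReal.ofReal (c' / 2 * r ^ d₂ * δ₁ * ω δ₁) * 2 := by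
        rw [ENNReal.one_sub_inv_two, inv_inv]
    _ = ENNReal.ofReal (c' * r ^ d₂ * δ₁ * ω δ₁) := by
        rw [← ENNReal.ofReal_ofNat, ← ENNReal.ofReal_mul hann]
        congr 1
        ring
end
end

section
/- Let m ≥ 3, let K ⊂ ℝ^m be a compact set satisfying Condition A with constants c₀, c₁, and let ω be a continuity modulus. Then there exists a constant c > 0 (depending only on K, ω, m and the Condition A constants) such that for every point X₀ ∈ K and every δ > 0, one has ∫_{B_δ(X₀)} ω(d(Y))/d(Y) dY ≤ c δ^{m−1} ω(δ), where the integrand is interpreted as 0 at points of K. -/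
open MeasureTheory Metric Set Filter
open scoped ENNReal NNReal

noncomputable section

private lemma cover_vol {m : ℕ} {K : Set (EuclideanSpace ℝ (Fin m))}
    {c₀ c₁ : ℝ} {Z : ℝ → Finset (EuclideanSpace ℝ (Fin m))}
    (hc₀ : 0 < c₀) (hc₁ : 0 < c₁)
    (hAZ : ∀ δ : ℝ, 0 < δ →
      ((Z δ : Set (EuclideanSpace ℝ (Fin m))) ⊆ K) ∧
      (∀ x ∈ Z δ, ∀ y ∈ Z δ, x ≠ y → δ ≤ dist x y) ∧
      (Metric.thickening δ K ⊆ ⋃ z ∈ Z δ, Metric.closedBall z (c₀ * δ)) ∧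
      (∀ R : ℝ, δ ≤ R → ∀ X : EuclideanSpace ℝ (Fin m),
        (((Z δ : Set (EuclideanSpace ℝ (Fin m))) ∩ Metric.closedBall X R).ncard : ℝ)
          ≤ c₁ * (R / δ) ^ (m - 2)))
    (X₀ : EuclideanSpace ℝ (Fin m)) {δ r : ℝ} (hr : 0 < r) (hrδ : r ≤ δ) :
    volume (Metric.ball X₀ δ ∩ Metric.thickening r K)
      ≤ ENNReal.ofReal (c₁ * ((δ + c₀ * r) / r) ^ (m - 2) * (c₀ * r) ^ m)
        * volume (Metric.ball (0 : EuclideanSpace ℝ (Fin m)) 1) := by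
  classical
  obtain ⟨_, _, hcov, hcount⟩ := hAZ r hr
  set R := δ + c₀ * r with hR
  have hrR : r ≤ R := le_trans hrδ (by nlinarith)
  set S := (Z r).filter (fun z => z ∈ Metric.closedBall X₀ R) with hS
  have hsub : Metric.ball X₀ δ ∩ Metric.thickening r K ⊆
      ⋃ z ∈ S, Metric.closedBall z (c₀ * r) := by
    rintro Y ⟨hY1, hY2⟩
    obtain ⟨z, hz, hYz⟩ := mem_iUnion₂.1 (hcov hY2)
    refine mem_iUnion₂.2 ⟨z, ?_, hYz⟩
    refine Finset.mem_filter.2 ⟨hz, ?_⟩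
    have h1 : dist Y z ≤ c₀ * r := hYz
    have h2 : dist Y X₀ ≤ δ := le_of_lt hY1
    have : dist z X₀ ≤ R := by
      calc dist z X₀ ≤ dist z Y + dist Y X₀ := dist_triangle _ _ _
        _ ≤ c₀ * r + δ := by rw [dist_comm z Y]; exact add_le_add h1 h2
        _ = R := by rw [hR]; ring
    exact this
  have hcard : ((S.card : ℝ)) ≤ c₁ * (R / r) ^ (m - 2) := by
    have := hcount R hrR X₀
    have heq : ((Z r : Set (EuclideanSpace ℝ (Fin m))) ∩ Metric.closedBall X₀ R).ncard
        = S.card := by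
      rw [← Set.ncard_coe_finset S]
      congr 1
      rw [hS, Finset.coe_filter]
      ext z; simp [Set.mem_sep_iff]
    rw [heq] at this
    exact this
  have hballvol : ∀ z : EuclideanSpace ℝ (Fin m),
      volume (Metric.closedBall z (c₀ * r))
        = ENNReal.ofReal ((c₀ * r) ^ m)
          * volume (Metric.ball (0 : EuclideanSpace ℝ (Fin m)) 1) := by
    intro z
    rw [Measure.addHaar_closedBall volume z (by positivity), finrank_euclideanSpace_fin]
  calc volume (Metric.ball X₀ δ ∩ Metric.thickening r K)
      ≤ volume (⋃ z ∈ S, Metric.closedBall z (c₀ * r)) := measure_mono hsub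
    _ ≤ ∑ z ∈ S, volume (Metric.closedBall z (c₀ * r)) := measure_biUnion_finset_le _ _
    _ = (S.card : ℝ≥0∞) * (ENNReal.ofReal ((c₀ * r) ^ m)
          * volume (Metric.ball (0 : EuclideanSpace ℝ (Fin m)) 1)) := by
        rw [Finset.sum_congr rfl (fun z _ => hballvol z), Finset.sum_const, nsmul_eq_mul]
    _ ≤ ENNReal.ofReal (c₁ * (R / r) ^ (m - 2)) * (ENNReal.ofReal ((c₀ * r) ^ m)
          * volume (Metric.ball (0 : EuclideanSpace ℝ (Fin m)) 1)) := by
        gcongr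
        rw [show ((S.card : ℝ≥0∞)) = ENNReal.ofReal (S.card : ℝ) by
          simp [ENNReal.ofReal_natCast]]
        exact ENNReal.ofReal_le_ofReal hcard
    _ = ENNReal.ofReal (c₁ * ((δ + c₀ * r) / r) ^ (m - 2) * (c₀ * r) ^ m)
          * volume (Metric.ball (0 : EuclideanSpace ℝ (Fin m)) 1) := by
        rw [← mul_assoc, ← ENNReal.ofReal_mul (mul_nonneg hc₁.le (pow_nonneg (div_nonneg (by nlinarith) hr.le) _))]

private lemma key_real {n : ℕ} {c₀ c₁ δ : ℝ} (hc₀ : 0 < c₀) (hc₁ : 0 < c₁) (hδ : 0 < δ)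
    {ω : ℝ → ℝ} (hωpos : ∀ t : ℝ, 0 < t → 0 < ω t)
    (hωmono : ∀ s t : ℝ, 0 < s → s ≤ t → ω s ≤ ω t) (j : ℕ) :
    (ω (δ / 2 ^ (j+1)) / (δ / 2 ^ (j+1))) *
      (c₁ * ((δ + c₀ * (δ / 2 ^ j)) / (δ / 2 ^ j)) ^ (n+1) * (c₀ * (δ / 2 ^ j)) ^ (n+3))
      ≤ (2 * c₁ * (1 + c₀) ^ (n+1) * c₀ ^ (n+3) * δ ^ (n+2) * ω δ) * (1/2) ^ j := by
  have h2j : (0:ℝ) < 2 ^ j := by positivity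
  have h2j1 : (1:ℝ) ≤ 2 ^ j := one_le_pow₀ (by norm_num)
  have ht0 : (0:ℝ) < δ / 2 ^ (j+1) := by positivity
  have htδ : δ / 2 ^ (j+1) ≤ δ := by
    rw [div_le_iff₀ (by positivity)]
    nlinarith [one_le_pow₀ (show (1:ℝ) ≤ 2 by norm_num) (n := j+1)]
  have hω1 : ω (δ / 2 ^ (j+1)) ≤ ω δ := hωmono _ _ ht0 htδ
  have hωδ : 0 < ω δ := hωpos δ hδ
  have hratio : (δ + c₀ * (δ / 2 ^ j)) / (δ / 2 ^ j) = 2 ^ j + c₀ := by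
    field_simp
  calc (ω (δ / 2 ^ (j+1)) / (δ / 2 ^ (j+1))) *
        (c₁ * ((δ + c₀ * (δ / 2 ^ j)) / (δ / 2 ^ j)) ^ (n+1) * (c₀ * (δ / 2 ^ j)) ^ (n+3))
      = (ω (δ / 2 ^ (j+1)) / (δ / 2 ^ (j+1))) *
        (c₁ * ((2:ℝ) ^ j + c₀) ^ (n+1) * (c₀ * (δ / 2 ^ j)) ^ (n+3)) := by rw [hratio]
    _ ≤ (ω δ / (δ / 2 ^ (j+1))) *
        (c₁ * ((1 + c₀) * 2 ^ j) ^ (n+1) * (c₀ * (δ / 2 ^ j)) ^ (n+3)) := by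
        gcongr <;> first
          | positivity
          | nlinarith [hωpos _ ht0, hω1]
    _ = (2 * c₁ * (1 + c₀) ^ (n+1) * c₀ ^ (n+3) * δ ^ (n+2) * ω δ) * (1/2) ^ j := by
        rw [mul_pow, ← pow_mul]
        field_simp
        ring_nf
        simp only [one_div, inv_pow, ← pow_mul]
        field_simp
        ring_nf

/-- estimate (5.9) of the paper:
`∫_{B_δ(X₀)} ω(d(Y))/d(Y) dY ≤ c δ^{m-1} ω(δ)` for `X₀ ∈ K`, `δ > 0`. -/
theorem ball_integral_estimate {m : ℕ} (hm : 3 ≤ m)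
    (K : Set (EuclideanSpace ℝ (Fin m))) (hK : IsCompact K)
    (c₀ c₁ : ℝ) (Z : ℝ → Finset (EuclideanSpace ℝ (Fin m)))
    (hA : ConditionA m K c₀ c₁ Z)
    (ω : ℝ → ℝ) (hω : IsContinuityModulus ω) :
    ∃ c : ℝ, 0 < c ∧
      ∀ X₀ ∈ K, ∀ δ : ℝ, 0 < δ →
        (∫⁻ Y in Metric.ball X₀ δ,
          ENNReal.ofReal (ω (Metric.infDist Y K) / Metric.infDist Y K))
          ≤ ENNReal.ofReal (c * δ ^ (m - 1) * ω δ) := by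
  classical
  obtain ⟨n, rfl⟩ : ∃ n, m = n + 3 := ⟨m - 3, by omega⟩
  have e1 : n + 3 - 1 = n + 2 := by omega
  have e2 : n + 3 - 2 = n + 1 := by omega
  obtain ⟨hc₀, hc₁, hAZ⟩ := hA
  obtain ⟨hωpos, hωmono, _, _, hωdiv⟩ := hω
  set μB := volume (Metric.ball (0 : EuclideanSpace ℝ (Fin (n+3))) 1) with hμB
  have hμBpos : 0 < μB := measure_ball_pos _ _ one_pos
  have hμBfin : μB ≠ ⊤ := measure_ball_lt_top.ne
  have hμBtR : 0 < μB.toReal := ENNReal.toReal_pos hμBpos.ne' hμBfin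
  refine ⟨4 * c₁ * (1 + c₀) ^ (n+1) * c₀ ^ (n+3) * μB.toReal, ?_, ?_⟩
  · positivity
  intro X₀ hX₀ δ hδ
  rw [e1]
  have hKne : K.Nonempty := ⟨X₀, hX₀⟩
  have hKcl : IsClosed K := hK.isClosed
  set f : EuclideanSpace ℝ (Fin (n+3)) → ℝ≥0∞ :=
    fun Y => ENNReal.ofReal (ω (Metric.infDist Y K) / Metric.infDist Y K) with hf
  set A : ℕ → Set (EuclideanSpace ℝ (Fin (n+3))) := fun j =>
    Metric.ball X₀ δ ∩
      {Y | δ / 2 ^ (j+1) ≤ Metric.infDist Y K ∧ Metric.infDist Y K < δ / 2 ^ j} with hA'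
  -- coverage of the ball by K and the dyadic shells
  have hcover : Metric.ball X₀ δ ⊆ K ∪ ⋃ j, A j := by
    intro Y hY
    by_cases hYK : Y ∈ K
    · exact Or.inl hYK
    right
    have hd0 : 0 < Metric.infDist Y K := (hKcl.notMem_iff_infDist_pos hKne).1 hYK
    have hdδ : Metric.infDist Y K < δ :=
      lt_of_le_of_lt (Metric.infDist_le_dist_of_mem hX₀) (mem_ball.1 hY)
    have hex : ∃ k : ℕ, δ / 2 ^ (k+1) ≤ Metric.infDist Y K := by
      obtain ⟨k, hk⟩ := pow_unbounded_of_one_lt (δ / Metric.infDist Y K)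
        (one_lt_two (α := ℝ))
      refine ⟨k, ?_⟩
      rw [div_le_iff₀ (by positivity)]
      rw [div_lt_iff₀ hd0] at hk
      have h2 : (2:ℝ) ^ k ≤ 2 ^ (k+1) := by
        apply pow_le_pow_right₀ one_le_two (Nat.le_succ k)
      nlinarith [mul_le_mul_of_nonneg_left h2 hd0.le]
    refine mem_iUnion.2 ⟨Nat.find hex, hY, Nat.find_spec hex, ?_⟩
    rcases Nat.eq_zero_or_eq_succ_pred (Nat.find hex) with h0 | hsucc
    · rw [h0]; simpa using hdδ
    · rw [hsucc]
      have hmin := Nat.find_min hex (Nat.lt_of_lt_of_le (Nat.pred_lt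
        (by rw [hsucc]; exact Nat.succ_ne_zero _)) le_rfl)
      push_neg at hmin
      exact hmin
  -- the bound on each dyadic shell
  have hshell : ∀ j : ℕ, (∫⁻ Y in A j, f Y) ≤
      ENNReal.ofReal ((2 * c₁ * (1 + c₀) ^ (n+1) * c₀ ^ (n+3) * δ ^ (n+2) * ω δ)
        * (1/2) ^ j) * μB := by
    intro j
    have ht0 : (0:ℝ) < δ / 2 ^ (j+1) := by positivity
    have hbound : ∀ Y ∈ A j, f Y ≤ ENNReal.ofReal (ω (δ / 2 ^ (j+1)) / (δ / 2 ^ (j+1))) := by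
      rintro Y ⟨-, h1, -⟩
      exact ENNReal.ofReal_le_ofReal (hωdiv _ _ ht0 h1)
    have h1 : (∫⁻ Y in A j, f Y)
        ≤ ENNReal.ofReal (ω (δ / 2 ^ (j+1)) / (δ / 2 ^ (j+1))) * volume (A j) := by
      calc (∫⁻ Y in A j, f Y)
          ≤ ∫⁻ _ in A j, ENNReal.ofReal (ω (δ / 2 ^ (j+1)) / (δ / 2 ^ (j+1))) :=
            setLIntegral_mono measurable_const hbound
        _ = _ := setLIntegral_const _ _
    have hsub : A j ⊆ Metric.ball X₀ δ ∩ Metric.thickening (δ / 2 ^ j) K := by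
      rintro Y ⟨hY1, -, h2⟩
      exact ⟨hY1, (Metric.mem_thickening_iff_infDist_lt hKne).2 h2⟩
    have hr0 : (0:ℝ) < δ / 2 ^ j := by positivity
    have hrδ : δ / 2 ^ j ≤ δ := by
      rw [div_le_iff₀ (by positivity)]
      nlinarith [one_le_pow₀ (show (1:ℝ) ≤ 2 by norm_num) (n := j)]
    have h2 := cover_vol hc₀ hc₁ hAZ X₀ hr0 hrδ
    rw [e2] at h2
    have h3 : volume (A j) ≤ ENNReal.ofReal
        (c₁ * ((δ + c₀ * (δ / 2 ^ j)) / (δ / 2 ^ j)) ^ (n+1) * (c₀ * (δ / 2 ^ j)) ^ (n+3))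
          * μB := le_trans (measure_mono hsub) h2
    have hnn : (0:ℝ) ≤ ω (δ / 2 ^ (j+1)) / (δ / 2 ^ (j+1)) :=
      div_nonneg (hωpos _ ht0).le ht0.le
    calc (∫⁻ Y in A j, f Y)
        ≤ ENNReal.ofReal (ω (δ / 2 ^ (j+1)) / (δ / 2 ^ (j+1))) *
          (ENNReal.ofReal (c₁ * ((δ + c₀ * (δ / 2 ^ j)) / (δ / 2 ^ j)) ^ (n+1)
            * (c₀ * (δ / 2 ^ j)) ^ (n+3)) * μB) :=
          le_trans h1 (mul_le_mul_right h3 _)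
      _ = ENNReal.ofReal ((ω (δ / 2 ^ (j+1)) / (δ / 2 ^ (j+1))) *
            (c₁ * ((δ + c₀ * (δ / 2 ^ j)) / (δ / 2 ^ j)) ^ (n+1)
              * (c₀ * (δ / 2 ^ j)) ^ (n+3))) * μB := by
          rw [← mul_assoc, ← ENNReal.ofReal_mul hnn]
      _ ≤ ENNReal.ofReal ((2 * c₁ * (1 + c₀) ^ (n+1) * c₀ ^ (n+3) * δ ^ (n+2) * ω δ)
            * (1/2) ^ j) * μB := by
          exact mul_le_mul_left
            (ENNReal.ofReal_le_ofReal (key_real hc₀ hc₁ hδ hωpos hωmono j)) μB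
  -- integral over K vanishes
  have hK0 : (∫⁻ Y in K, f Y) = 0 := by
    have hae : ∀ᵐ Y ∂(volume.restrict K), f Y = 0 := by
      filter_upwards [ae_restrict_mem hKcl.measurableSet] with Y hY
      simp [hf, Metric.infDist_zero_of_mem hY]
    rw [lintegral_congr_ae hae, lintegral_zero]
  -- sum the geometric series
  have hhalf : ∀ j : ℕ, ENNReal.ofReal ((1/2:ℝ) ^ j) = (2⁻¹ : ℝ≥0∞) ^ j := by
    intro j
    rw [ENNReal.ofReal_pow (by norm_num)]
    congr 1
    rw [one_div, ENNReal.ofReal_inv_of_pos two_pos]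
    norm_num
  set X : ℝ := 2 * c₁ * (1 + c₀) ^ (n+1) * c₀ ^ (n+3) * δ ^ (n+2) * ω δ with hX
  have hXnn : 0 ≤ X := by
    have := (hωpos δ hδ).le
    positivity
  calc (∫⁻ Y in Metric.ball X₀ δ, f Y)
      ≤ ∫⁻ Y in K ∪ ⋃ j, A j, f Y := lintegral_mono_set hcover
    _ ≤ (∫⁻ Y in K, f Y) + ∫⁻ Y in ⋃ j, A j, f Y := lintegral_union_le _ _ _
    _ ≤ 0 + ∑' j, ∫⁻ Y in A j, f Y := by
        rw [hK0]
        exact add_le_add le_rfl (lintegral_iUnion_le _ _)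
    _ ≤ ∑' j, ENNReal.ofReal (X * (1/2) ^ j) * μB := by
        rw [zero_add]
        exact ENNReal.tsum_le_tsum hshell
    _ = (ENNReal.ofReal X * μB) * ∑' j : ℕ, (2⁻¹ : ℝ≥0∞) ^ j := by
        rw [← ENNReal.tsum_mul_left]
        refine tsum_congr fun j => ?_
        rw [ENNReal.ofReal_mul hXnn, hhalf j]
        ring
    _ = (ENNReal.ofReal X * μB) * 2 := by
        rw [ENNReal.tsum_geometric, ENNReal.one_sub_inv_two]
        norm_num
    _ = ENNReal.ofReal (4 * c₁ * (1 + c₀) ^ (n+1) * c₀ ^ (n+3) * μB.toReal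
          * δ ^ (n+2) * ω δ) := by
        have h2X : ENNReal.ofReal X * μB * 2 = ENNReal.ofReal (2 * X) * μB := by
          rw [ENNReal.ofReal_mul (by norm_num : (0:ℝ) ≤ 2), ENNReal.ofReal_ofNat]
          ring
        rw [h2X]
        conv_lhs => rw [← ENNReal.ofReal_toReal hμBfin]
        rw [← ENNReal.ofReal_mul (by linarith : (0:ℝ) ≤ 2 * X)]
        congr 1
        rw [hX]
        ring
end
end

section
/- Let m ≥ 3, let K ⊂ ℝ^m be a compact set satisfying Condition A with constants c₀, c₁, and let ω be a continuity modulus satisfying the integral conditions. Then there exists a constant c > 0 such that for every point X₀ ∈ K and every r > 0, one has ∫_{B_r(X₀)} ω(d(Y))/d(Y) · |Y − X₀|^{1−m} dY ≤ c ω(r), where the integrand is interpreted as 0 at points of K. -/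
open MeasureTheory Metric Set Filter

noncomputable section

/-- dyadic localization -/
lemma exists_dyadic {x r : ℝ} (hx : 0 < x) (hxr : x < r) :
    ∃ j : ℕ, r / 2 ^ (j + 1) ≤ x ∧ x < r / 2 ^ j := by
  classical
  have hr : 0 < r := hx.trans hxr
  have hP : ∃ n : ℕ, r / 2 ^ n ≤ x := by
    obtain ⟨N, hN⟩ := pow_unbounded_of_one_lt (r / x) (by norm_num : (1:ℝ) < 2)
    exact ⟨N, by
      rw [div_le_iff₀ (by positivity)]
      rw [div_lt_iff₀ hx] at hN
      nlinarith⟩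
  have hn0 : Nat.find hP ≠ 0 := by
    intro h
    have := Nat.find_spec hP
    rw [h] at this
    simp at this
    linarith
  obtain ⟨j, hj⟩ : ∃ j, Nat.find hP = j + 1 := ⟨Nat.find hP - 1, by omega⟩
  refine ⟨j, ?_, ?_⟩
  · have := Nat.find_spec hP
    rwa [hj] at this
  · have := Nat.find_min hP (m := j) (by omega)
    push_neg at this
    linarith

/-- Lemma A: measure of the `s`-neighborhood of `K` inside a ball of radius `ρ`. -/
lemma measA {m : ℕ} (hm : 3 ≤ m) {K : Set (EuclideanSpace ℝ (Fin m))}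
    {c₀ c₁ : ℝ} {Z : ℝ → Finset (EuclideanSpace ℝ (Fin m))}
    (hA : ConditionA m K c₀ c₁ Z)
    {X₀ : EuclideanSpace ℝ (Fin m)} (hX₀ : X₀ ∈ K) {s ρ : ℝ} (hs : 0 < s) (hsρ : s ≤ ρ) :
    volume ({Y : EuclideanSpace ℝ (Fin m) | Metric.infDist Y K ≤ s} ∩ Metric.closedBall X₀ ρ)
      ≤ ENNReal.ofReal
        ((c₁ * ((3 + 2 * c₀) / 2) ^ (m - 2) * (2 * c₀) ^ m *
          (volume (Metric.closedBall (0 : EuclideanSpace ℝ (Fin m)) 1)).toReal)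
          * ρ ^ (m - 2) * s ^ 2) := by
  obtain ⟨hc₀, hc₁, hZ⟩ := hA
  have hδ : (0:ℝ) < 2 * s := by linarith
  obtain ⟨hZK, hsep, hcov, hcount⟩ := hZ (2 * s) hδ
  have hρ : 0 < ρ := hs.trans_le hsρ
  set R : ℝ := ρ + 2 * c₀ * s + 2 * s with hRdef
  have hc₀s : 0 < c₀ * s := mul_pos hc₀ hs
  have hR : 2 * s ≤ R := by nlinarith
  classical
  set F : Finset (EuclideanSpace ℝ (Fin m)) :=
    (Z (2*s)).filter (fun z => z ∈ Metric.closedBall X₀ R) with hFdef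
  have hsubset : {Y : EuclideanSpace ℝ (Fin m) | Metric.infDist Y K ≤ s} ∩ Metric.closedBall X₀ ρ
      ⊆ ⋃ z ∈ F, Metric.closedBall z (c₀ * (2*s)) := by
    rintro Y ⟨hY1, hY2⟩
    have hYthick : Y ∈ Metric.thickening (2*s) K := by
      rw [Metric.mem_thickening_iff_infDist_lt ⟨X₀, hX₀⟩]
      calc Metric.infDist Y K ≤ s := hY1
        _ < 2 * s := by linarith
    have := hcov hYthick
    simp only [Set.mem_iUnion, exists_prop] at this
    obtain ⟨z, hzZ, hYz⟩ := this
    have hYz' : dist Y z ≤ c₀ * (2*s) := by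
      simpa [Metric.mem_closedBall] using hYz
    have hzF : z ∈ F := by
      rw [hFdef, Finset.mem_filter]
      refine ⟨hzZ, ?_⟩
      rw [Metric.mem_closedBall]
      have h1 : dist z X₀ ≤ dist z Y + dist Y X₀ := dist_triangle z Y X₀
      have h2 : dist z Y = dist Y z := dist_comm z Y
      have h3 : dist Y X₀ ≤ ρ := by simpa [Metric.mem_closedBall] using hY2
      nlinarith
    exact Set.mem_biUnion hzF hYz
  have hvol : volume ({Y : EuclideanSpace ℝ (Fin m) | Metric.infDist Y K ≤ s}
        ∩ Metric.closedBall X₀ ρ)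
      ≤ ∑ z ∈ F, volume (Metric.closedBall z (c₀ * (2*s))) :=
    (measure_mono hsubset).trans (measure_biUnion_finset_le F _)
  have hball : ∀ z : EuclideanSpace ℝ (Fin m),
      volume (Metric.closedBall z (c₀ * (2*s)))
        = ENNReal.ofReal ((c₀ * (2*s)) ^ m) *
            volume (Metric.closedBall (0 : EuclideanSpace ℝ (Fin m)) 1) := by
    intro z
    rw [MeasureTheory.Measure.addHaar_closedBall' volume z (by positivity)]
    rw [finrank_euclideanSpace_fin]
  have hcard : (F.card : ℝ) ≤ c₁ * (R / (2*s)) ^ (m - 2) := by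
    have h1 := hcount R hR X₀
    have h2 : ((Z (2*s) : Set (EuclideanSpace ℝ (Fin m))) ∩ Metric.closedBall X₀ R) = ↑F := by
      rw [hFdef]
      ext z
      simp [Finset.mem_filter]
    rw [h2, Set.ncard_coe_finset] at h1
    exact h1
  set V : ℝ := (volume (Metric.closedBall (0 : EuclideanSpace ℝ (Fin m)) 1)).toReal with hVdef
  have hVfin : volume (Metric.closedBall (0 : EuclideanSpace ℝ (Fin m)) 1) ≠ ⊤ :=
    (measure_closedBall_lt_top).ne
  have hVnn : 0 ≤ V := ENNReal.toReal_nonneg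
  have hVeq : volume (Metric.closedBall (0 : EuclideanSpace ℝ (Fin m)) 1) = ENNReal.ofReal V := by
    rw [hVdef, ENNReal.ofReal_toReal hVfin]
  calc volume ({Y : EuclideanSpace ℝ (Fin m) | Metric.infDist Y K ≤ s}
        ∩ Metric.closedBall X₀ ρ)
      ≤ ∑ z ∈ F, volume (Metric.closedBall z (c₀ * (2*s))) := hvol
    _ = (F.card : ENNReal) * (ENNReal.ofReal ((c₀ * (2*s)) ^ m) * ENNReal.ofReal V) := by
        simp only [hball, hVeq, Finset.sum_const, nsmul_eq_mul]
    _ = ENNReal.ofReal ((F.card : ℝ) * ((c₀ * (2*s)) ^ m * V)) := by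
        rw [ENNReal.ofReal_mul (Nat.cast_nonneg _),
          ENNReal.ofReal_mul (by positivity : (0:ℝ) ≤ (c₀ * (2*s)) ^ m),
          ENNReal.ofReal_natCast]
    _ ≤ ENNReal.ofReal ((c₁ * ((3 + 2 * c₀) / 2) ^ (m - 2) * (2 * c₀) ^ m * V)
          * ρ ^ (m - 2) * s ^ 2) := by
        apply ENNReal.ofReal_le_ofReal
        have hcbm : (0:ℝ) ≤ (c₀ * (2*s)) ^ m * V := by positivity
        have key : (c₁ * (R / (2*s)) ^ (m - 2)) * ((c₀ * (2*s)) ^ m * V)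
            ≤ (c₁ * ((3 + 2 * c₀) / 2) ^ (m - 2) * (2 * c₀) ^ m * V) * ρ ^ (m - 2) * s ^ 2 := by
          obtain ⟨n, rfl⟩ : ∃ n, m = n + 2 := ⟨m - 2, by omega⟩
          simp only [Nat.add_sub_cancel]
          have hRle : R / (2*s) ≤ (3 + 2*c₀) / 2 * (ρ / s) := by
            rw [div_le_iff₀ (by linarith)]
            have : R ≤ (3 + 2*c₀) * ρ := by nlinarith
            calc R ≤ (3 + 2*c₀) * ρ := this
              _ = (3 + 2*c₀) / 2 * (ρ / s) * (2 * s) := by field_simp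
          have hpow : (R / (2*s)) ^ n ≤ ((3 + 2*c₀) / 2 * (ρ / s)) ^ n :=
            pow_le_pow_left₀ (by positivity) hRle n
          have heq : (c₁ * ((3 + 2*c₀) / 2 * (ρ / s)) ^ n) * ((c₀ * (2*s)) ^ (n+2) * V)
              = (c₁ * ((3 + 2 * c₀) / 2) ^ n * (2 * c₀) ^ (n+2) * V) * ρ ^ n * s ^ 2 := by
            have hs' : s ≠ 0 := ne_of_gt hs
            simp only [mul_pow, div_pow]
            field_simp
            ring
          calc (c₁ * (R / (2*s)) ^ n) * ((c₀ * (2*s)) ^ (n+2) * V)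
              ≤ (c₁ * ((3 + 2*c₀) / 2 * (ρ / s)) ^ n) * ((c₀ * (2*s)) ^ (n+2) * V) := by
                apply mul_le_mul_of_nonneg_right _ (by positivity)
                exact mul_le_mul_of_nonneg_left hpow hc₁.le
            _ = _ := heq
        calc (F.card : ℝ) * ((c₀ * (2*s)) ^ m * V)
            ≤ (c₁ * (R / (2*s)) ^ (m - 2)) * ((c₀ * (2*s)) ^ m * V) :=
              mul_le_mul_of_nonneg_right hcard hcbm
          _ ≤ _ := key

/-- Lemma B : Dini sum. -/
lemma diniSum {ω : ℝ → ℝ} (hpos : ∀ t : ℝ, 0 < t → 0 < ω t)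
    (hmono : ∀ s t : ℝ, 0 < s → s ≤ t → ω s ≤ ω t)
    (hdiv : ∀ s t : ℝ, 0 < s → s ≤ t → ω t / t ≤ ω s / s)
    {C' r : ℝ} (hr : 0 < r)
    (hint1 : (∫⁻ τ in Set.Ioo (0:ℝ) r, ENNReal.ofReal (ω τ / τ)) ≤ ENNReal.ofReal (C' * ω r)) :
    ∑' j : ℕ, ENNReal.ofReal (ω (r / 2 ^ j)) ≤ ENNReal.ofReal (2 * C' * ω r) := by
  classical
  set g : ℝ → ℝ := fun t => if 0 < t then ω t else 0 with hgdef
  have hgmono : Monotone g := by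
    intro a b hab
    simp only [hgdef]
    split_ifs with ha hb hb
    · exact hmono a b ha hab
    · exact absurd (ha.trans_le hab) hb
    · exact (hpos b hb).le
    · exact le_rfl
  have hgmeas : Measurable g := hgmono.measurable
  set F : ℝ → ENNReal := fun τ => ENNReal.ofReal (g τ / τ) with hFdef
  have hFmeas : Measurable F := (hgmeas.div measurable_id).ennreal_ofReal
  set I : ℕ → Set ℝ := fun j => Set.Ioo (r / 2 ^ (j+1)) (r / 2 ^ j) with hIdef
  have hImeas : ∀ j, MeasurableSet (I j) := fun j => measurableSet_Ioo
  have hIsub : ∀ j, I j ⊆ Set.Ioo (0:ℝ) r := by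
    intro j x hx
    obtain ⟨h1, h2⟩ := hx
    constructor
    · have : (0:ℝ) < r / 2 ^ (j+1) := by positivity
      linarith
    · calc x < r / 2 ^ j := h2
        _ ≤ r / 1 := by
          apply div_le_div_of_nonneg_left hr.le one_pos
          exact one_le_pow₀ (by norm_num : (1:ℝ) ≤ 2)
        _ = r := div_one r
  have hIdisj : Pairwise (Function.onFun Disjoint I) := by
    intro i j hij
    have key : ∀ a b : ℕ, a < b → Disjoint (I a) (I b) := by
      intro a b hab
      rw [Set.disjoint_left]
      rintro x ⟨hx1, _⟩ ⟨_, hx4⟩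
      have h2 : (2:ℝ) ^ (a+1) ≤ 2 ^ b := by
        apply pow_le_pow_right₀ (by norm_num : (1:ℝ) ≤ 2); omega
      have : r / 2 ^ b ≤ r / 2 ^ (a+1) :=
        div_le_div_of_nonneg_left hr.le (by positivity) h2
      linarith
    rcases hij.lt_or_gt with h | h
    · exact key i j h
    · exact (key j i h).symm
  have hkey : ∀ j : ℕ, ENNReal.ofReal (ω (r / 2 ^ j) / 2) ≤ ∫⁻ τ in I j, F τ := by
    intro j
    have hρ : (0:ℝ) < r / 2 ^ j := by positivity
    have hρ' : (0:ℝ) < r / 2 ^ (j+1) := by positivity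
    have hlow : ∀ τ ∈ I j, ENNReal.ofReal (ω (r / 2 ^ j) / (r / 2 ^ j)) ≤ F τ := by
      intro τ hτ
      obtain ⟨h1, h2⟩ := hτ
      have hτpos : 0 < τ := hρ'.trans h1
      have : ω (r / 2 ^ j) / (r / 2 ^ j) ≤ ω τ / τ := hdiv τ (r / 2 ^ j) hτpos h2.le
      rw [hFdef]
      simp only
      rw [hgdef]
      simp only [if_pos hτpos]
      exact ENNReal.ofReal_le_ofReal this
    have hlen : r / 2 ^ j - r / 2 ^ (j+1) = r / 2 ^ (j+1) := by
      field_simp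
      ring
    calc ENNReal.ofReal (ω (r / 2 ^ j) / 2)
        = ENNReal.ofReal (ω (r / 2 ^ j) / (r / 2 ^ j)) * volume (I j) := by
          rw [hIdef]
          simp only [Real.volume_Ioo, hlen]
          rw [← ENNReal.ofReal_mul (div_nonneg (hpos _ hρ).le hρ.le)]
          congr 1
          field_simp
          ring
      _ = ∫⁻ _ in I j, ENNReal.ofReal (ω (r / 2 ^ j) / (r / 2 ^ j)) := by
          rw [setLIntegral_const]
      _ ≤ ∫⁻ τ in I j, F τ := setLIntegral_mono hFmeas hlow
  have hsum : ∑' j : ℕ, ENNReal.ofReal (ω (r / 2 ^ j) / 2) ≤ ENNReal.ofReal (C' * ω r) := by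
    calc ∑' j : ℕ, ENNReal.ofReal (ω (r / 2 ^ j) / 2)
        ≤ ∑' j : ℕ, ∫⁻ τ in I j, F τ := ENNReal.tsum_le_tsum hkey
      _ = ∫⁻ τ in ⋃ j, I j, F τ := (lintegral_iUnion hImeas hIdisj F).symm
      _ ≤ ∫⁻ τ in Set.Ioo (0:ℝ) r, F τ := lintegral_mono_set (Set.iUnion_subset hIsub)
      _ = ∫⁻ τ in Set.Ioo (0:ℝ) r, ENNReal.ofReal (ω τ / τ) := by
          apply setLIntegral_congr_fun measurableSet_Ioo
          intro τ hτ
          rw [hFdef]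
          simp only
          rw [hgdef]
          simp only [if_pos hτ.1]
      _ ≤ ENNReal.ofReal (C' * ω r) := hint1
  calc ∑' j : ℕ, ENNReal.ofReal (ω (r / 2 ^ j))
      = ∑' j : ℕ, ENNReal.ofReal 2 * ENNReal.ofReal (ω (r / 2 ^ j) / 2) := by
        congr 1
        funext j
        rw [← ENNReal.ofReal_mul (by norm_num : (0:ℝ) ≤ 2)]
        congr 1
        ring
    _ = ENNReal.ofReal 2 * ∑' j : ℕ, ENNReal.ofReal (ω (r / 2 ^ j) / 2) :=
        ENNReal.tsum_mul_left
    _ ≤ ENNReal.ofReal 2 * ENNReal.ofReal (C' * ω r) :=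
        mul_le_mul_right hsum _
    _ = ENNReal.ofReal (2 * C' * ω r) := by
        rw [← ENNReal.ofReal_mul (by norm_num : (0:ℝ) ≤ 2)]
        congr 1
        ring

/-- Lemma 6.1 of the paper:
`∫_{B_r(X₀)} ω(d(Y))/d(Y) · |Y - X₀|^{1-m} dY ≤ c ω(r)` for `X₀ ∈ K`, `r > 0`. -/
theorem kernel_integral_estimate_on_K {m : ℕ} (hm : 3 ≤ m)
    (K : Set (EuclideanSpace ℝ (Fin m))) (hK : IsCompact K)
    (c₀ c₁ : ℝ) (Z : ℝ → Finset (EuclideanSpace ℝ (Fin m)))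
    (hA : ConditionA m K c₀ c₁ Z)
    (ω : ℝ → ℝ) (hω : IsContinuityModulus ω)
    (C' C'' : ℝ) (hC' : 0 < C') (hC'' : 0 < C'')
    (hint1 : ∀ t : ℝ, 0 < t →
      (∫⁻ τ in Set.Ioo (0:ℝ) t, ENNReal.ofReal (ω τ / τ)) ≤ ENNReal.ofReal (C' * ω t))
    (hint2 : ∀ t : ℝ, 0 < t →
      (∫⁻ τ in Set.Ioi t, ENNReal.ofReal (ω τ / τ ^ 2)) ≤ ENNReal.ofReal (C'' * ω t / t)) :
    ∃ c : ℝ, 0 < c ∧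
      ∀ X₀ ∈ K, ∀ r : ℝ, 0 < r →
        (∫⁻ Y in Metric.ball X₀ r,
          ENNReal.ofReal (ω (Metric.infDist Y K) / Metric.infDist Y K
            * dist Y X₀ ^ ((1 : ℝ) - m)))
          ≤ ENNReal.ofReal (c * ω r) := by
  obtain ⟨n, rfl⟩ : ∃ n, m = n + 2 := ⟨m - 2, by omega⟩
  obtain ⟨hpos, hmono, hconc, hlim, hdiv⟩ := hω
  have hc₀ : 0 < c₀ := hA.1
  have hc₁ : 0 < c₁ := hA.2.1
  set V : ℝ := (volume (Metric.closedBall (0 : EuclideanSpace ℝ (Fin (n+2))) 1)).toReal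
    with hVdef
  have hVpos : 0 < V := by
    rw [hVdef]
    apply ENNReal.toReal_pos
    · exact ((measure_ball_pos volume (0:EuclideanSpace ℝ (Fin (n+2))) one_pos).trans_le
        (measure_mono Metric.ball_subset_closedBall)).ne'
    · exact measure_closedBall_lt_top.ne
  set C2 : ℝ := c₁ * ((3 + 2 * c₀) / 2) ^ (n + 2 - 2) * (2 * c₀) ^ (n + 2) * V with hC2def
  have hC2pos : 0 < C2 := by rw [hC2def]; positivity
  refine ⟨4 * 2 ^ (n + 2) * C2 * C', by positivity, ?_⟩
  intro X₀ hX₀ r hr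
  set S : ℕ × ℕ → Set (EuclideanSpace ℝ (Fin (n+2))) := fun p =>
    ((fun Y => dist Y X₀) ⁻¹' Set.Ico (r / 2 ^ (p.1 + 1)) (r / 2 ^ p.1)) ∩
    ((fun Y => Metric.infDist Y K) ⁻¹'
      Set.Icc (r / 2 ^ (p.1 + p.2 + 1)) (r / 2 ^ (p.1 + p.2))) with hSdef
  have hdistm : Measurable (fun Y : EuclideanSpace ℝ (Fin (n+2)) => dist Y X₀) :=
    (continuous_id.dist continuous_const).measurable
  have hinfm : Measurable (fun Y : EuclideanSpace ℝ (Fin (n+2)) => Metric.infDist Y K) :=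
    (Metric.continuous_infDist_pt K).measurable
  have hSmeas : ∀ p, MeasurableSet (S p) := fun p =>
    (hdistm measurableSet_Ico).inter (hinfm measurableSet_Icc)
  set U : Set (EuclideanSpace ℝ (Fin (n+2))) := ⋃ p : ℕ × ℕ, S p with hUdef
  have hUmeas : MeasurableSet U := MeasurableSet.iUnion hSmeas
  set f : EuclideanSpace ℝ (Fin (n+2)) → ENNReal := fun Y =>
    ENNReal.ofReal (ω (Metric.infDist Y K) / Metric.infDist Y K
      * dist Y X₀ ^ ((1:ℝ) - (n+2:ℕ))) with hfdef
  have hexp_ne : ((1:ℝ) - (n+2:ℕ)) ≠ 0 := by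
    push_cast
    intro h
    have : (n:ℝ) ≥ 0 := Nat.cast_nonneg n
    linarith
  have hexp_np : ((1:ℝ) - (n+2:ℕ)) ≤ 0 := by
    push_cast
    have : (n:ℝ) ≥ 0 := Nat.cast_nonneg n
    linarith
  -- Step 1
  have hstep1 : (∫⁻ Y in Metric.ball X₀ r, f Y) ≤ ∫⁻ Y in U, f Y := by
    calc ∫⁻ Y in Metric.ball X₀ r, f Y
        ≤ ∫⁻ Y in Metric.ball X₀ r, U.indicator f Y := by
          apply setLIntegral_mono' measurableSet_ball
          intro Y hY
          by_cases hYU : Y ∈ U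
          · rw [Set.indicator_of_mem hYU]
          · rw [Set.indicator_of_notMem hYU]
            have hd0 : Metric.infDist Y K = 0 ∨ dist Y X₀ = 0 := by
              by_contra hcon
              push_neg at hcon
              obtain ⟨h1, h2⟩ := hcon
              have hdpos : 0 < Metric.infDist Y K :=
                lt_of_le_of_ne Metric.infDist_nonneg (Ne.symm h1)
              have hdistpos : 0 < dist Y X₀ := lt_of_le_of_ne dist_nonneg (Ne.symm h2)
              have hdistr : dist Y X₀ < r := Metric.mem_ball.mp hY
              obtain ⟨j, hj1, hj2⟩ := exists_dyadic hdistpos hdistr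
              have hdled : Metric.infDist Y K ≤ dist Y X₀ :=
                Metric.infDist_le_dist_of_mem hX₀
              have hdlt : Metric.infDist Y K < r / 2 ^ j := lt_of_le_of_lt hdled hj2
              obtain ⟨k, hk1, hk2⟩ := exists_dyadic hdpos hdlt
              have hdd1 : r / 2 ^ j / 2 ^ (k + 1) = r / 2 ^ (j + k + 1) := by
                rw [div_div, ← pow_add, show j + (k + 1) = j + k + 1 from by omega]
              have hdd2 : r / 2 ^ j / 2 ^ k = r / 2 ^ (j + k) := by
                rw [div_div, ← pow_add]
              apply hYU
              rw [hUdef]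
              refine Set.mem_iUnion.mpr ⟨(j, k), ?_⟩
              rw [hSdef]
              refine ⟨?_, ?_⟩
              · simp only [Set.mem_preimage, Set.mem_Ico]
                exact ⟨hj1, hj2⟩
              · simp only [Set.mem_preimage, Set.mem_Icc]
                constructor
                · rw [← hdd1]; exact hk1
                · rw [← hdd2]; exact hk2.le
            have hzero : f Y = 0 := by
              rw [hfdef]
              simp only
              rcases hd0 with h | h
              · rw [h, div_zero, zero_mul, ENNReal.ofReal_zero]
              · rw [h, Real.zero_rpow hexp_ne, mul_zero, ENNReal.ofReal_zero]
            rw [hzero]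
      _ ≤ ∫⁻ Y, U.indicator f Y := setLIntegral_le_lintegral _ _
      _ = ∫⁻ Y in U, f Y := lintegral_indicator hUmeas f
  -- Step 2
  have hstep2 : (∫⁻ Y in U, f Y) ≤ ∑' p : ℕ × ℕ, ∫⁻ Y in S p, f Y := by
    rw [hUdef]
    exact lintegral_iUnion_le S f
  -- Step 3
  have hstep3 : ∀ p : ℕ × ℕ, (∫⁻ Y in S p, f Y)
      ≤ ENNReal.ofReal (2 ^ (n + 2) * C2 * (ω (r / 2 ^ (p.1 + p.2)) / 2 ^ p.2)) := by
    rintro ⟨j, k⟩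
    have hspos : (0:ℝ) < r / 2 ^ (j + k) := by positivity
    have hρpos : (0:ℝ) < r / 2 ^ j := by positivity
    have hρ'pos : (0:ℝ) < r / 2 ^ (j + 1) := by positivity
    have hsρ : r / 2 ^ (j + k) ≤ r / 2 ^ j := by
      apply div_le_div_of_nonneg_left hr.le (by positivity)
      apply pow_le_pow_right₀ (by norm_num : (1:ℝ) ≤ 2)
      omega
    set B : ℝ := ω (r / 2 ^ (j + k)) * (2 ^ (j + k + 1) / r)
      * (r / 2 ^ (j + 1)) ^ ((1:ℝ) - (n+2:ℕ)) with hBdef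
    have hBnonneg : 0 ≤ B := by
      rw [hBdef]
      apply mul_nonneg (mul_nonneg (hpos _ hspos).le (by positivity))
        (Real.rpow_nonneg hρ'pos.le _)
    have hptwise : ∀ Y ∈ S (j, k), f Y ≤ ENNReal.ofReal B := by
      intro Y hY
      rw [hSdef] at hY
      obtain ⟨hY1, hY2⟩ := hY
      simp only [Set.mem_preimage, Set.mem_Ico] at hY1
      simp only [Set.mem_preimage, Set.mem_Icc] at hY2
      obtain ⟨hdist1, hdist2⟩ := hY1
      obtain ⟨hd1, hd2⟩ := hY2
      have hdpos : 0 < Metric.infDist Y K := lt_of_lt_of_le (by positivity) hd1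
      have hdistpos : 0 < dist Y X₀ := lt_of_lt_of_le hρ'pos hdist1
      rw [hfdef, hBdef]
      apply ENNReal.ofReal_le_ofReal
      have h1 : ω (Metric.infDist Y K) / Metric.infDist Y K
          ≤ ω (r / 2 ^ (j + k)) * (2 ^ (j + k + 1) / r) := by
        have hωle : ω (Metric.infDist Y K) ≤ ω (r / 2 ^ (j + k)) := hmono _ _ hdpos hd2
        have hinv : 1 / Metric.infDist Y K ≤ 2 ^ (j + k + 1) / r := by
          rw [div_le_div_iff₀ hdpos hr]
          rw [div_le_iff₀ (by positivity : (0:ℝ) < 2 ^ (j + k + 1))] at hd1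
          linarith
        calc ω (Metric.infDist Y K) / Metric.infDist Y K
            = ω (Metric.infDist Y K) * (1 / Metric.infDist Y K) := by ring
          _ ≤ ω (r / 2 ^ (j + k)) * (2 ^ (j + k + 1) / r) :=
              mul_le_mul hωle hinv (by positivity) (hpos _ hspos).le
      have h2 : dist Y X₀ ^ ((1:ℝ) - (n+2:ℕ))
          ≤ (r / 2 ^ (j + 1)) ^ ((1:ℝ) - (n+2:ℕ)) :=
        Real.rpow_le_rpow_of_nonpos hρ'pos hdist1 hexp_np
      exact mul_le_mul h1 h2 (Real.rpow_nonneg dist_nonneg _)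
        (mul_nonneg (hpos _ hspos).le (by positivity))
    have hμ : volume (S (j, k))
        ≤ ENNReal.ofReal (C2 * (r / 2 ^ j) ^ (n + 2 - 2) * (r / 2 ^ (j + k)) ^ 2) := by
      have hsub : S (j, k) ⊆ {Y : EuclideanSpace ℝ (Fin (n+2)) |
          Metric.infDist Y K ≤ r / 2 ^ (j + k)} ∩ Metric.closedBall X₀ (r / 2 ^ j) := by
        rintro Y ⟨hY1, hY2⟩
        simp only [Set.mem_preimage, Set.mem_Ico] at hY1
        simp only [Set.mem_preimage, Set.mem_Icc] at hY2
        exact ⟨hY2.2, Metric.mem_closedBall.mpr hY1.2.le⟩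
      calc volume (S (j, k)) ≤ _ := measure_mono hsub
        _ ≤ _ := by
            have := measA hm hA hX₀ hspos hsρ
            rw [hC2def]
            rw [hVdef]
            exact this
    calc ∫⁻ Y in S (j, k), f Y
        ≤ ∫⁻ _ in S (j, k), ENNReal.ofReal B := setLIntegral_mono' (hSmeas _) hptwise
      _ = ENNReal.ofReal B * volume (S (j, k)) := setLIntegral_const _ _
      _ ≤ ENNReal.ofReal B
            * ENNReal.ofReal (C2 * (r / 2 ^ j) ^ (n + 2 - 2) * (r / 2 ^ (j + k)) ^ 2) :=
          mul_le_mul_right hμ _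
      _ = ENNReal.ofReal (B * (C2 * (r / 2 ^ j) ^ (n + 2 - 2) * (r / 2 ^ (j + k)) ^ 2)) :=
          (ENNReal.ofReal_mul hBnonneg).symm
      _ = ENNReal.ofReal (2 ^ (n + 2) * C2 * (ω (r / 2 ^ (j + k)) / 2 ^ k)) := by
          congr 1
          rw [hBdef]
          have hrpow : (r / 2 ^ (j + 1)) ^ ((1:ℝ) - (n+2:ℕ))
              = ((r / 2 ^ (j + 1)) ^ (n + 1 : ℕ))⁻¹ := by
            rw [show ((1:ℝ) - (n+2:ℕ)) = -((n + 1 : ℕ) : ℝ) by push_cast; ring]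
            rw [Real.rpow_neg hρ'pos.le, Real.rpow_natCast]
          rw [hrpow]
          simp only [Nat.add_sub_cancel, div_pow]
          field_simp
          ring
  -- Step 4
  have hA2 : (0:ℝ) ≤ 2 ^ (n + 2) * C2 := by positivity
  have hdini := diniSum hpos hmono hdiv hr (hint1 r hr)
  have hstep4 : (∑' p : ℕ × ℕ,
        ENNReal.ofReal (2 ^ (n + 2) * C2 * (ω (r / 2 ^ (p.1 + p.2)) / 2 ^ p.2)))
      ≤ ENNReal.ofReal (4 * 2 ^ (n + 2) * C2 * C' * ω r) := by
    have hhalf : ENNReal.ofReal ((1:ℝ)/2) = 2⁻¹ := by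
      rw [one_div, ENNReal.ofReal_inv_of_pos two_pos, ENNReal.ofReal_ofNat]
    calc (∑' p : ℕ × ℕ,
          ENNReal.ofReal (2 ^ (n + 2) * C2 * (ω (r / 2 ^ (p.1 + p.2)) / 2 ^ p.2)))
        = ∑' j : ℕ, ∑' k : ℕ,
            ENNReal.ofReal (2 ^ (n + 2) * C2 * (ω (r / 2 ^ (j + k)) / 2 ^ k)) :=
          ENNReal.tsum_prod'
      _ ≤ ∑' j : ℕ, ∑' k : ℕ,
            (ENNReal.ofReal (2 ^ (n + 2) * C2 * ω (r / 2 ^ j))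
              * ENNReal.ofReal ((1:ℝ)/2) ^ k) := by
          apply ENNReal.tsum_le_tsum
          intro j
          apply ENNReal.tsum_le_tsum
          intro k
          have hωle : ω (r / 2 ^ (j + k)) ≤ ω (r / 2 ^ j) := by
            apply hmono _ _ (by positivity)
            apply div_le_div_of_nonneg_left hr.le (by positivity)
            apply pow_le_pow_right₀ (by norm_num : (1:ℝ) ≤ 2)
            omega
          have hAω : (0:ℝ) ≤ 2 ^ (n + 2) * C2 * ω (r / 2 ^ j) :=
            mul_nonneg hA2 (hpos _ (by positivity)).le
          calc ENNReal.ofReal (2 ^ (n + 2) * C2 * (ω (r / 2 ^ (j + k)) / 2 ^ k))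
              ≤ ENNReal.ofReal ((2 ^ (n + 2) * C2 * ω (r / 2 ^ j)) * ((1:ℝ)/2) ^ k) := by
                apply ENNReal.ofReal_le_ofReal
                rw [show (2 ^ (n + 2) * C2 * ω (r / 2 ^ j)) * ((1:ℝ)/2) ^ k
                    = 2 ^ (n + 2) * C2 * (ω (r / 2 ^ j) / 2 ^ k) by
                  rw [one_div, inv_pow]; ring]
                apply mul_le_mul_of_nonneg_left _ hA2
                exact (div_le_div_iff_of_pos_right (by positivity)).mpr hωle
            _ = ENNReal.ofReal (2 ^ (n + 2) * C2 * ω (r / 2 ^ j))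
                  * ENNReal.ofReal ((1:ℝ)/2) ^ k := by
                rw [ENNReal.ofReal_mul hAω, ENNReal.ofReal_pow (by norm_num : (0:ℝ) ≤ 1/2)]
      _ = ∑' j : ℕ, ENNReal.ofReal (2 ^ (n + 2) * C2 * ω (r / 2 ^ j)) * 2 := by
          apply tsum_congr
          intro j
          rw [ENNReal.tsum_mul_left, ENNReal.tsum_geometric, hhalf,
            ENNReal.one_sub_inv_two, inv_inv]
      _ = (2 * ENNReal.ofReal (2 ^ (n + 2) * C2)) * ∑' j : ℕ, ENNReal.ofReal (ω (r / 2 ^ j)) := by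
          calc ∑' j : ℕ, ENNReal.ofReal (2 ^ (n + 2) * C2 * ω (r / 2 ^ j)) * 2
              = ∑' j : ℕ, (2 * ENNReal.ofReal (2 ^ (n + 2) * C2))
                  * ENNReal.ofReal (ω (r / 2 ^ j)) := by
                apply tsum_congr
                intro j
                rw [ENNReal.ofReal_mul hA2]
                ring
            _ = _ := ENNReal.tsum_mul_left
      _ ≤ (2 * ENNReal.ofReal (2 ^ (n + 2) * C2)) * ENNReal.ofReal (2 * C' * ω r) :=
          mul_le_mul_right hdini _
      _ = ENNReal.ofReal (4 * 2 ^ (n + 2) * C2 * C' * ω r) := by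
          rw [show (2:ENNReal) = ENNReal.ofReal 2 from (ENNReal.ofReal_ofNat 2).symm]
          rw [← ENNReal.ofReal_mul (by norm_num : (0:ℝ) ≤ 2)]
          rw [← ENNReal.ofReal_mul (by positivity)]
          congr 1
          ring
  calc (∫⁻ Y in Metric.ball X₀ r,
        ENNReal.ofReal (ω (Metric.infDist Y K) / Metric.infDist Y K
          * dist Y X₀ ^ ((1 : ℝ) - (n+2:ℕ))))
      = ∫⁻ Y in Metric.ball X₀ r, f Y := rfl
    _ ≤ ∫⁻ Y in U, f Y := hstep1
    _ ≤ ∑' p : ℕ × ℕ, ∫⁻ Y in S p, f Y := hstep2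
    _ ≤ ∑' p : ℕ × ℕ,
          ENNReal.ofReal (2 ^ (n + 2) * C2 * (ω (r / 2 ^ (p.1 + p.2)) / 2 ^ p.2)) :=
        ENNReal.tsum_le_tsum hstep3
    _ ≤ ENNReal.ofReal (4 * 2 ^ (n + 2) * C2 * C' * ω r) := hstep4
    _ = ENNReal.ofReal (4 * 2 ^ (n + 2) * C2 * C' * ω r) := rfl
end
end

section
/- Let m ≥ 3, let K ⊂ ℝ^m be a compact set satisfying Condition A with constants c₀, c₁, and let ω be a continuity modulus satisfying the integral conditions. Then there exists a constant c > 0 such that for every point X ∉ K, setting δ₀ = dist(X, K), one has ∫_{B_{2δ₀}(X)} ω(d(Y))/d(Y) · |X − Y|^{1−m} dY ≤ c ω(δ₀), where the integrand is interpreted as 0 at points of K. -/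
open MeasureTheory Metric Set Filter

noncomputable section

set_option maxHeartbeats 2000000 in
/-- Lemma 6.2 of the paper: for `X ∉ K` and `δ₀ = dist(X, K)`,
`∫_{B_{2δ₀}(X)} ω(d(Y))/d(Y) · |X - Y|^{1-m} dY ≤ c ω(δ₀)`. -/
theorem kernel_integral_estimate_off_K {m : ℕ} (hm : 3 ≤ m)
    (K : Set (EuclideanSpace ℝ (Fin m))) (hK : IsCompact K)
    (c₀ c₁ : ℝ) (Z : ℝ → Finset (EuclideanSpace ℝ (Fin m)))
    (hA : ConditionA m K c₀ c₁ Z)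
    (ω : ℝ → ℝ) (hω : IsContinuityModulus ω)
    (C' C'' : ℝ) (hC' : 0 < C') (hC'' : 0 < C'')
    (hint1 : ∀ t : ℝ, 0 < t →
      (∫⁻ τ in Set.Ioo (0:ℝ) t, ENNReal.ofReal (ω τ / τ)) ≤ ENNReal.ofReal (C' * ω t))
    (hint2 : ∀ t : ℝ, 0 < t →
      (∫⁻ τ in Set.Ioi t, ENNReal.ofReal (ω τ / τ ^ 2)) ≤ ENNReal.ofReal (C'' * ω t / t)) :
    ∃ c : ℝ, 0 < c ∧
      ∀ X : EuclideanSpace ℝ (Fin m), X ∉ K →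
        (∫⁻ Y in Metric.ball X (2 * Metric.infDist X K),
          ENNReal.ofReal (ω (Metric.infDist Y K) / Metric.infDist Y K
            * dist X Y ^ ((1 : ℝ) - m)))
          ≤ ENNReal.ofReal (c * ω (Metric.infDist X K)) := by
  classical
  obtain ⟨hc₀, hc₁, hAδ⟩ := hA
  obtain ⟨n, rfl⟩ : ∃ n, m = 3 + n := ⟨m - 3, by omega⟩
  have hfin : Module.finrank ℝ (EuclideanSpace ℝ (Fin (3 + n))) = 3 + n :=
    finrank_euclideanSpace_fin
  set V := volume (ball (0 : EuclideanSpace ℝ (Fin (3 + n))) 1) with hVdef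
  have hV0 : V ≠ 0 := (measure_ball_pos _ _ one_pos).ne'
  have hVtop : V ≠ ⊤ := measure_ball_lt_top.ne
  set Vr := V.toReal with hVrdef
  have hVr0 : 0 < Vr := ENNReal.toReal_pos hV0 hVtop
  have hVeq : ENNReal.ofReal Vr = V := ENNReal.ofReal_toReal hVtop
  set K₁ : ℝ := 2 ^ (n + 4) * c₁ * (2 + c₀) ^ (n + 1) * c₀ ^ (n + 3) with hK₁def
  have hK₁pos : 0 < K₁ := by positivity
  refine ⟨2 * Vr * (K₁ + 2 ^ (n + 4)), by positivity, ?_⟩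
  intro X hX
  rcases K.eq_empty_or_nonempty with hKe | hne
  · simp only [hKe, Metric.infDist_empty, mul_zero, Metric.ball_zero,
      Measure.restrict_empty, lintegral_zero_measure]
    exact zero_le
  -- main case
  have hδ₀ : 0 < infDist X K := (hK.isClosed.notMem_iff_infDist_pos hne).1 hX
  set δ₀ := infDist X K with hδ₀def
  have hω₀ : 0 < ω δ₀ := hω.1 δ₀ hδ₀
  have h2pow : ∀ i j : ℕ, i ≤ j → (2:ℝ) ^ i ≤ 2 ^ j := fun i j h =>
    pow_le_pow_right₀ one_le_two h
  have hexp_nonpos : ((1 : ℝ) - ((3 + n : ℕ) : ℝ)) ≤ 0 := by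
    push_cast; linarith [Nat.cast_nonneg (α := ℝ) n]
  have hrpow : ∀ a : ℝ, 0 < a →
      a ^ ((1 : ℝ) - ((3 + n : ℕ) : ℝ)) = (a ^ (n + 2))⁻¹ := by
    intro a ha
    rw [show ((1 : ℝ) - ((3 + n : ℕ) : ℝ)) = -((n + 2 : ℕ) : ℝ) by push_cast; ring,
      Real.rpow_neg ha.le, Real.rpow_natCast]
  have hcont : Continuous fun Y : EuclideanSpace ℝ (Fin (3 + n)) => infDist Y K :=
    continuous_infDist_pt K
  set s₀ : Set (EuclideanSpace ℝ (Fin (3 + n))) :=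
    (fun Y => infDist Y K) ⁻¹' {0} with hs₀def
  set S : ℕ → Set (EuclideanSpace ℝ (Fin (3 + n))) := fun k =>
    ball X (2 * δ₀) ∩ (fun Y => infDist Y K) ⁻¹' Ioc (δ₀ / 2 ^ (k + 2)) (δ₀ / 2 ^ (k + 1))
    with hSdef
  set A : ℕ → Set (EuclideanSpace ℝ (Fin (3 + n))) := fun j =>
    (fun Y => dist X Y) ⁻¹' Ico (δ₀ / 2 ^ j) (2 * (δ₀ / 2 ^ j)) ∩
      (fun Y => infDist Y K) ⁻¹' Ioi (δ₀ / 2) with hAdef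
  have hms₀ : MeasurableSet s₀ := hcont.measurable (measurableSet_singleton 0)
  have hmS : ∀ k, MeasurableSet (S k) := fun k =>
    measurableSet_ball.inter (hcont.measurable measurableSet_Ioc)
  have hmA : ∀ j, MeasurableSet (A j) := fun j =>
    (((continuous_const.dist continuous_id).measurable) measurableSet_Ico).inter
      (hcont.measurable measurableSet_Ioi)
  -- the integrand
  set f : EuclideanSpace ℝ (Fin (3 + n)) → ENNReal := fun Y =>
    ENNReal.ofReal (ω (infDist Y K) / infDist Y K * dist X Y ^ ((1 : ℝ) - ((3 + n : ℕ) : ℝ)))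
    with hfdef
  -- cover
  have hcover : ball X (2 * δ₀) ⊆ (s₀ ∪ {X}) ∪ ((⋃ k, S k) ∪ ⋃ j, A j) := by
    intro Y hY
    have hYX : dist X Y < 2 * δ₀ := by rw [dist_comm]; exact mem_ball.1 hY
    rcases eq_or_lt_of_le (infDist_nonneg (x := Y) (s := K)) with hd0 | hdpos
    · exact Or.inl (Or.inl hd0.symm)
    by_cases hd2 : infDist Y K ≤ δ₀ / 2
    · -- shell
      have hex : ∃ k : ℕ, δ₀ / 2 ^ (k + 2) < infDist Y K := by
        obtain ⟨N, hN⟩ := pow_unbounded_of_one_lt (δ₀ / infDist Y K) (one_lt_two (α := ℝ))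
        refine ⟨N, ?_⟩
        have h1 : δ₀ / 2 ^ N < infDist Y K := by
          rw [div_lt_iff₀ (by positivity)]
          rw [div_lt_iff₀ hdpos] at hN
          linarith [mul_comm ((2:ℝ) ^ N) (infDist Y K)]
        calc δ₀ / 2 ^ (N + 2) ≤ δ₀ / 2 ^ N :=
              div_le_div_of_nonneg_left hδ₀.le (by positivity) (h2pow N (N + 2) (by omega))
          _ < infDist Y K := h1
      refine Or.inr (Or.inl (mem_iUnion.2 ⟨Nat.find hex, mem_ball'.2 hYX, ?_⟩))
      refine ⟨Nat.find_spec hex, ?_⟩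
      rcases Nat.eq_zero_or_pos (Nat.find hex) with h0 | hpos
      · rw [h0]; simpa using hd2
      · obtain ⟨i, hi⟩ := Nat.exists_eq_add_of_lt hpos
        have hmin : ¬ (δ₀ / 2 ^ (i + 2) < infDist Y K) :=
          Nat.find_min hex (by omega)
        have heq : Nat.find hex + 1 = i + 2 := by omega
        rw [heq]
        exact not_lt.1 hmin
    · -- annulus or center
      push_neg at hd2
      by_cases hYeq : Y = X
      · exact Or.inl (Or.inr (by simp [hYeq]))
      have hdistpos : 0 < dist X Y := dist_pos.2 fun h => hYeq h.symm
      have hex : ∃ j : ℕ, δ₀ / 2 ^ j ≤ dist X Y := by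
        obtain ⟨N, hN⟩ := pow_unbounded_of_one_lt (δ₀ / dist X Y) (one_lt_two (α := ℝ))
        refine ⟨N, le_of_lt ?_⟩
        rw [div_lt_iff₀ (by positivity)]
        rw [div_lt_iff₀ hdistpos] at hN
        linarith
      refine Or.inr (Or.inr (mem_iUnion.2 ⟨Nat.find hex, ⟨Nat.find_spec hex, ?_⟩, hd2⟩))
      rcases Nat.eq_zero_or_pos (Nat.find hex) with h0 | hpos
      · rw [h0]; simpa using hYX
      · obtain ⟨i, hi⟩ := Nat.exists_eq_add_of_lt hpos
        have hlt : dist X Y < δ₀ / 2 ^ i :=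
          not_le.1 (Nat.find_min hex (by omega))
        have heq : 2 * (δ₀ / 2 ^ (Nat.find hex)) = δ₀ / 2 ^ i := by
          rw [show Nat.find hex = i + 1 from by omega, pow_succ]; ring
        linarith
  -- zero parts
  have h0s₀ : (∫⁻ Y in s₀, f Y) = 0 := by
    rw [setLIntegral_congr_fun hms₀ (fun Y hY => ?_), lintegral_zero]
    have : infDist Y K = 0 := hY
    simp [hfdef, this]
  have h0X : (∫⁻ Y in {X}, f Y) = 0 := by
    rw [setLIntegral_congr_fun (measurableSet_singleton X) (fun Y hY => ?_),
      lintegral_zero]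
    have hY' : Y = X := hY
    have hne' : ((1 : ℝ) - ((3 + n : ℕ) : ℝ)) ≠ 0 := by
      push_cast; intro h; have := Nat.cast_nonneg (α := ℝ) n; linarith
    show ENNReal.ofReal _ = 0
    rw [hY', dist_self, Real.zero_rpow hne', mul_zero, ENNReal.ofReal_zero]
  -- shell integral bound
  have hSbound : ∀ k : ℕ, (∫⁻ Y in S k, f Y) ≤
      ENNReal.ofReal (ω δ₀ * K₁) * (ENNReal.ofReal ((1:ℝ)/2)) ^ k * V := by
    intro k
    have h2k : (0:ℝ) < 2 ^ k := by positivity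
    set δ := δ₀ / 2 ^ k with hδdef
    have hδpos : 0 < δ := by positivity
    have hδle : δ ≤ δ₀ := div_le_self hδ₀.le (one_le_pow₀ one_le_two)
    obtain ⟨hZK, hsep, hcov, hcount⟩ := hAδ δ hδpos
    set R := 2 * δ₀ + c₀ * δ with hRdef
    have hRpos : 0 < R := by positivity
    have hδR : δ ≤ R := by nlinarith
    set T := (Z δ).filter (fun z => z ∈ closedBall X R) with hTdef
    -- pointwise bound on S k
    set P : ℝ := (ω δ₀ * (2 ^ (k + 2) / δ₀)) * ((δ₀ / 2) ^ (n + 2))⁻¹ with hPdef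
    have hPnonneg : 0 ≤ P := by positivity
    have hfb : ∀ Y ∈ S k, f Y ≤ ENNReal.ofReal P := by
      rintro Y ⟨hY1, hY2⟩
      simp only [mem_preimage, mem_Ioc] at hY2
      have hdY : 0 < infDist Y K := lt_trans (by positivity) hY2.1
      have hd2 : infDist Y K ≤ δ₀ / 2 := le_trans hY2.2
        (div_le_div_of_nonneg_left hδ₀.le (by norm_num)
          (by calc (2:ℝ) = 2 ^ 1 := (pow_one 2).symm
                _ ≤ 2 ^ (k + 1) := pow_le_pow_right₀ one_le_two (by omega)))
      have hdist : δ₀ / 2 ≤ dist X Y := by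
        have h2 := infDist_le_infDist_add_dist (x := X) (y := Y) (s := K)
        rw [← hδ₀def] at h2
        linarith
      have h1 : dist X Y ^ ((1 : ℝ) - ((3 + n : ℕ) : ℝ)) ≤ ((δ₀ / 2) ^ (n + 2))⁻¹ := by
        rw [← hrpow (δ₀ / 2) (by positivity)]
        exact Real.rpow_le_rpow_of_nonpos (by positivity) hdist hexp_nonpos
      have h2 : ω (infDist Y K) / infDist Y K ≤ ω δ₀ * (2 ^ (k + 2) / δ₀) := by
        have ha : ω (infDist Y K) ≤ ω δ₀ := hω.2.1 _ _ hdY (by linarith)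
        have hb : ω (infDist Y K) / infDist Y K ≤ ω δ₀ / (δ₀ / 2 ^ (k + 2)) :=
          div_le_div₀ ( hω.1 δ₀ hδ₀).le ha (by positivity) hY2.1.le
        have hc : ω δ₀ / (δ₀ / 2 ^ (k + 2)) = ω δ₀ * (2 ^ (k + 2) / δ₀) := by
          field_simp
        linarith
      apply ENNReal.ofReal_le_ofReal
      rw [hPdef]
      apply mul_le_mul h2 h1 (Real.rpow_nonneg dist_nonneg _)
      positivity
    -- measure bound on S k
    have hsub : S k ⊆ ⋃ z ∈ T, closedBall z (c₀ * δ) := by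
      rintro Y ⟨hY1, hY2⟩
      simp only [mem_preimage, mem_Ioc] at hY2
      have hdlt : infDist Y K < δ := lt_of_le_of_lt hY2.2
        (div_lt_div_of_pos_left hδ₀ (by positivity)
          (by exact_mod_cast pow_lt_pow_right₀ one_lt_two (by omega)))
      have hthick : Y ∈ thickening δ K := by
        obtain ⟨z, hzK, hz⟩ := hK.exists_infDist_eq_dist hne Y
        exact mem_thickening_iff.2 ⟨z, hzK, by rw [← hz]; exact hdlt⟩
      obtain ⟨z, hz⟩ := mem_iUnion.1 (hcov hthick)
      obtain ⟨hzZ, hzY⟩ := mem_iUnion.1 hz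
      refine mem_iUnion.2 ⟨z, mem_iUnion.2 ⟨?_, hzY⟩⟩
      refine Finset.mem_filter.2 ⟨hzZ, mem_closedBall.2 ?_⟩
      have h1 : dist Y z ≤ c₀ * δ := mem_closedBall.1 hzY
      have h2 : dist Y X < 2 * δ₀ := mem_ball.1 hY1
      calc dist z X ≤ dist z Y + dist Y X := dist_triangle _ _ _
        _ ≤ c₀ * δ + 2 * δ₀ := by rw [dist_comm z Y]; linarith
        _ = R := by rw [hRdef]; ring
    have hcard : (T.card : ENNReal) ≤ ENNReal.ofReal (c₁ * ((2 + c₀) * 2 ^ k) ^ (n + 1)) := by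
      have hTset : (T : Set (EuclideanSpace ℝ (Fin (3 + n)))) =
          (Z δ : Set (EuclideanSpace ℝ (Fin (3 + n)))) ∩ closedBall X R := by
        ext z; simp [hTdef]
      have h1 := hcount R hδR X
      rw [← hTset, ncard_coe_finset] at h1
      rw [show 3 + n - 2 = n + 1 from by omega] at h1
      have h2 : (R / δ) ^ (n + 1) ≤ ((2 + c₀) * 2 ^ k) ^ (n + 1) := by
        apply pow_le_pow_left₀ (by positivity)
        have hδ₀δ : δ₀ / δ = 2 ^ k := by rw [hδdef]; field_simp
        have hRle : R ≤ (2 + c₀) * δ₀ := by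
          have : c₀ * (δ₀ / 2 ^ k) ≤ c₀ * δ₀ :=
            mul_le_mul_of_nonneg_left
              (div_le_self hδ₀.le (one_le_pow₀ one_le_two)) hc₀.le
          rw [hRdef, hδdef]; nlinarith
        calc R / δ ≤ ((2 + c₀) * δ₀) / δ := by gcongr
          _ = (2 + c₀) * 2 ^ k := by rw [mul_div_assoc, hδ₀δ]
      calc (T.card : ENNReal) = ENNReal.ofReal (T.card : ℝ) := by
            rw [ENNReal.ofReal_natCast]
        _ ≤ ENNReal.ofReal (c₁ * ((2 + c₀) * 2 ^ k) ^ (n + 1)) := by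
            apply ENNReal.ofReal_le_ofReal
            calc (T.card : ℝ) ≤ c₁ * (R / δ) ^ (n + 1) := h1
              _ ≤ c₁ * ((2 + c₀) * 2 ^ k) ^ (n + 1) :=
                mul_le_mul_of_nonneg_left h2 hc₁.le
    have hmeasS : volume (S k) ≤
        ENNReal.ofReal (c₁ * ((2 + c₀) * 2 ^ k) ^ (n + 1) * (c₀ * δ) ^ (3 + n)) * V := by
      calc volume (S k) ≤ volume (⋃ z ∈ T, closedBall z (c₀ * δ)) := measure_mono hsub
        _ ≤ ∑ z ∈ T, volume (closedBall z (c₀ * δ)) := measure_biUnion_finset_le _ _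
        _ = T.card • (ENNReal.ofReal ((c₀ * δ) ^ (3 + n)) * V) := by
            rw [Finset.sum_congr rfl fun z _ => ?_, Finset.sum_const]
            rw [Measure.addHaar_closedBall _ _ (by positivity), hfin, hVdef]
        _ = (T.card : ENNReal) * (ENNReal.ofReal ((c₀ * δ) ^ (3 + n)) * V) := by
            rw [nsmul_eq_mul]
        _ ≤ ENNReal.ofReal (c₁ * ((2 + c₀) * 2 ^ k) ^ (n + 1)) *
              (ENNReal.ofReal ((c₀ * δ) ^ (3 + n)) * V) := by
            exact mul_le_mul_left hcard _
        _ = ENNReal.ofReal (c₁ * ((2 + c₀) * 2 ^ k) ^ (n + 1) * (c₀ * δ) ^ (3 + n)) * V := by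
            rw [← mul_assoc, ← ENNReal.ofReal_mul (by positivity)]
    -- combine
    calc (∫⁻ Y in S k, f Y) ≤ ∫⁻ _ in S k, ENNReal.ofReal P := setLIntegral_mono' (hmS k) hfb
      _ = ENNReal.ofReal P * volume (S k) := setLIntegral_const _ _
      _ ≤ ENNReal.ofReal P *
          (ENNReal.ofReal (c₁ * ((2 + c₀) * 2 ^ k) ^ (n + 1) * (c₀ * δ) ^ (3 + n)) * V) :=
            mul_le_mul_right hmeasS _
      _ = ENNReal.ofReal (P * (c₁ * ((2 + c₀) * 2 ^ k) ^ (n + 1) * (c₀ * δ) ^ (3 + n))) * V := by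
            rw [← mul_assoc, ← ENNReal.ofReal_mul hPnonneg]
      _ = ENNReal.ofReal (ω δ₀ * K₁ * ((1:ℝ)/2) ^ k) * V := by
            congr 2
            rw [hPdef, hδdef, hK₁def]
            simp only [mul_pow, div_pow, one_pow]
            field_simp
            ring
      _ = ENNReal.ofReal (ω δ₀ * K₁) * (ENNReal.ofReal ((1:ℝ)/2)) ^ k * V := by
            rw [ENNReal.ofReal_mul (by positivity), ENNReal.ofReal_pow (by norm_num)]
  -- annulus integral bound
  have hAbound : ∀ j : ℕ, (∫⁻ Y in A j, f Y) ≤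
      ENNReal.ofReal (ω δ₀ * 2 ^ (n + 4)) * (ENNReal.ofReal ((1:ℝ)/2)) ^ j * V := by
    intro j
    have h2j : (0:ℝ) < 2 ^ j := by positivity
    set Q : ℝ := (ω δ₀ * (2 / δ₀)) * ((δ₀ / 2 ^ j) ^ (n + 2))⁻¹ with hQdef
    have hQnonneg : 0 ≤ Q := by positivity
    have hfb : ∀ Y ∈ A j, f Y ≤ ENNReal.ofReal Q := by
      rintro Y ⟨hY1, hY2⟩
      simp only [mem_preimage, mem_Ico] at hY1
      simp only [mem_preimage, mem_Ioi] at hY2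
      have hdY : 0 < infDist Y K := lt_trans (by positivity) hY2
      have h1 : dist X Y ^ ((1 : ℝ) - ((3 + n : ℕ) : ℝ)) ≤ ((δ₀ / 2 ^ j) ^ (n + 2))⁻¹ := by
        rw [← hrpow (δ₀ / 2 ^ j) (by positivity)]
        exact Real.rpow_le_rpow_of_nonpos (by positivity) hY1.1 hexp_nonpos
      have h2 : ω (infDist Y K) / infDist Y K ≤ ω δ₀ * (2 / δ₀) := by
        have ha : ω (infDist Y K) / infDist Y K ≤ ω (δ₀ / 2) / (δ₀ / 2) :=
          hω.2.2.2.2 (δ₀ / 2) (infDist Y K) (by positivity) hY2.le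
        have hb : ω (δ₀ / 2) ≤ ω δ₀ := hω.2.1 _ _ (by positivity) (by linarith)
        have hc : ω (δ₀ / 2) / (δ₀ / 2) ≤ ω δ₀ / (δ₀ / 2) := by gcongr
        have hd : ω δ₀ / (δ₀ / 2) = ω δ₀ * (2 / δ₀) := by field_simp
        linarith
      apply ENNReal.ofReal_le_ofReal
      rw [hQdef]
      apply mul_le_mul h2 h1 (Real.rpow_nonneg dist_nonneg _)
      positivity
    have hmeasA : volume (A j) ≤ ENNReal.ofReal ((2 * (δ₀ / 2 ^ j)) ^ (3 + n)) * V := by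
      have hsub : A j ⊆ closedBall X (2 * (δ₀ / 2 ^ j)) := by
        rintro Y ⟨hY1, _⟩
        simp only [mem_preimage, mem_Ico] at hY1
        rw [mem_closedBall, dist_comm]
        exact hY1.2.le
      calc volume (A j) ≤ volume (closedBall X (2 * (δ₀ / 2 ^ j))) := measure_mono hsub
        _ = ENNReal.ofReal ((2 * (δ₀ / 2 ^ j)) ^ (3 + n)) * V := by
            rw [Measure.addHaar_closedBall _ _ (by positivity), hfin, hVdef]
    calc (∫⁻ Y in A j, f Y) ≤ ∫⁻ _ in A j, ENNReal.ofReal Q := setLIntegral_mono' (hmA j) hfb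
      _ = ENNReal.ofReal Q * volume (A j) := setLIntegral_const _ _
      _ ≤ ENNReal.ofReal Q * (ENNReal.ofReal ((2 * (δ₀ / 2 ^ j)) ^ (3 + n)) * V) :=
            mul_le_mul_right hmeasA _
      _ = ENNReal.ofReal (Q * (2 * (δ₀ / 2 ^ j)) ^ (3 + n)) * V := by
            rw [← mul_assoc, ← ENNReal.ofReal_mul hQnonneg]
      _ = ENNReal.ofReal (ω δ₀ * 2 ^ (n + 4) * ((1:ℝ)/2) ^ j) * V := by
            congr 2
            rw [hQdef]
            simp only [mul_pow, div_pow, one_pow]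
            field_simp
            ring
      _ = ENNReal.ofReal (ω δ₀ * 2 ^ (n + 4)) * (ENNReal.ofReal ((1:ℝ)/2)) ^ j * V := by
            rw [ENNReal.ofReal_mul (by positivity), ENNReal.ofReal_pow (by norm_num)]
  -- geometric sum
  have hgeo : (∑' k : ℕ, (ENNReal.ofReal ((1:ℝ)/2)) ^ k) = 2 := by
    rw [show ENNReal.ofReal ((1:ℝ)/2) = 2⁻¹ by
        rw [one_div, ENNReal.ofReal_inv_of_pos two_pos]; norm_num,
      ENNReal.tsum_geometric, ENNReal.one_sub_inv_two, inv_inv]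
  have htsum : ∀ a : ENNReal,
      (∑' k : ℕ, a * (ENNReal.ofReal ((1:ℝ)/2)) ^ k * V) = a * 2 * V := by
    intro a
    have : ∀ k : ℕ, a * (ENNReal.ofReal ((1:ℝ)/2)) ^ k * V =
        (a * V) * (ENNReal.ofReal ((1:ℝ)/2)) ^ k := fun k => by ring
    simp only [this]
    rw [ENNReal.tsum_mul_left, hgeo]
    ring
  -- assemble
  calc (∫⁻ Y in ball X (2 * δ₀), f Y)
      ≤ ∫⁻ Y in (s₀ ∪ {X}) ∪ ((⋃ k, S k) ∪ ⋃ j, A j), f Y := lintegral_mono_set hcover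
    _ ≤ (∫⁻ Y in s₀ ∪ {X}, f Y) + ∫⁻ Y in (⋃ k, S k) ∪ ⋃ j, A j, f Y :=
        lintegral_union_le _ _ _
    _ ≤ ((∫⁻ Y in s₀, f Y) + ∫⁻ Y in {X}, f Y) +
        ((∫⁻ Y in ⋃ k, S k, f Y) + ∫⁻ Y in ⋃ j, A j, f Y) :=
        add_le_add (lintegral_union_le _ _ _) (lintegral_union_le _ _ _)
    _ ≤ (0 + 0) + ((∑' k : ℕ, ∫⁻ Y in S k, f Y) + ∑' j : ℕ, ∫⁻ Y in A j, f Y) := by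
        rw [h0s₀, h0X]
        exact add_le_add le_rfl (add_le_add (lintegral_iUnion_le _ _) (lintegral_iUnion_le _ _))
    _ ≤ (0 + 0) + ((ENNReal.ofReal (ω δ₀ * K₁) * 2 * V) +
          (ENNReal.ofReal (ω δ₀ * 2 ^ (n + 4)) * 2 * V)) := by
        refine add_le_add le_rfl (add_le_add ?_ ?_)
        · calc (∑' k : ℕ, ∫⁻ Y in S k, f Y)
              ≤ ∑' k : ℕ, ENNReal.ofReal (ω δ₀ * K₁) * (ENNReal.ofReal ((1:ℝ)/2)) ^ k * V :=
              ENNReal.tsum_le_tsum hSbound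
            _ = ENNReal.ofReal (ω δ₀ * K₁) * 2 * V := htsum _
        · calc (∑' j : ℕ, ∫⁻ Y in A j, f Y)
              ≤ ∑' j : ℕ, ENNReal.ofReal (ω δ₀ * 2 ^ (n + 4)) * (ENNReal.ofReal ((1:ℝ)/2)) ^ j * V :=
              ENNReal.tsum_le_tsum hAbound
            _ = ENNReal.ofReal (ω δ₀ * 2 ^ (n + 4)) * 2 * V := htsum _
    _ = ENNReal.ofReal (2 * Vr * (K₁ + 2 ^ (n + 4)) * ω δ₀) := by
        rw [zero_add, zero_add, ← hVeq,
          show (2 : ENNReal) = ENNReal.ofReal (2:ℝ) by norm_num,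
          ← ENNReal.ofReal_mul (by positivity), ← ENNReal.ofReal_mul (by positivity),
          ← ENNReal.ofReal_mul (by positivity), ← ENNReal.ofReal_mul (by positivity),
          ← ENNReal.ofReal_add (by positivity) (by positivity)]
        congr 1
        ring
end
end

section
/- Let m ≥ 3, let K ⊂ ℝ^m be a compact set satisfying Condition A with constants c₀, c₁, fix c > max(2c₀, c₁), and let B(δ₁) be the union of the open balls of radius cδ₁ centered at the points of Z(δ₁). Then there exists a constant c' > 0 (depending only on K, m and the Condition A constants) such that for every δ₁ ∈ (0, diam K), the (m−1)-dimensional Hausdorff measure of the topological boundary of B(δ₁) satisfies H^{m−1}(∂B(δ₁)) ≤ c' δ₁. -/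
open MeasureTheory Metric Set Filter

noncomputable section

open scoped ENNReal NNReal

private lemma euclid_norm_sq {k : ℕ} (x : EuclideanSpace ℝ (Fin k)) :
    ‖x‖ ^ 2 = ∑ i, x i ^ 2 := by
  rw [EuclideanSpace.norm_eq, Real.sq_sqrt (by positivity)]
  exact Finset.sum_congr rfl fun _ _ => by rw [Real.norm_eq_abs, sq_abs]

private lemma euclid_compact_hausdorff_ne_top {n : ℕ} {s : Set (EuclideanSpace ℝ (Fin n))}
    (hs : IsCompact s) : μH[(n : ℝ)] s ≠ ⊤ := by
  have h : (n : ℝ) = ((Module.finrank ℝ (EuclideanSpace ℝ (Fin n)) : ℕ) : ℝ) := by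
    simp [finrank_euclideanSpace_fin]
  rw [h]
  exact hs.measure_lt_top.ne

private def capMap {n : ℕ} (i : Fin (n + 1)) (σ : ℝ) (v : EuclideanSpace ℝ (Fin n)) :
    EuclideanSpace ℝ (Fin (n + 1)) :=
  WithLp.toLp 2 (i.insertNth (σ * Real.sqrt (1 - ‖v‖ ^ 2)) v.ofLp : Fin (n + 1) → ℝ)

set_option maxHeartbeats 1000000 in
private lemma cap_lipschitz (n : ℕ) (i : Fin (n + 1)) (σ : ℝ) (hσ : σ = 1 ∨ σ = -1) :
    LipschitzOnWith (Real.toNNReal (Real.sqrt ((n : ℝ) + 2)))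
      (capMap i σ)
      {v : EuclideanSpace ℝ (Fin n) | ‖v‖ ^ 2 + 1 / ((n : ℝ) + 1) ≤ 1} := by
  apply LipschitzOnWith.of_dist_le_mul
  intro v hv w hw
  simp only [Set.mem_setOf_eq] at hv hw
  have hn1 : (0 : ℝ) < (n : ℝ) + 1 := by positivity
  set hv' : ℝ := Real.sqrt (1 - ‖v‖ ^ 2) with hhv
  set hw' : ℝ := Real.sqrt (1 - ‖w‖ ^ 2) with hhw
  have hv1 : 1 / ((n : ℝ) + 1) ≤ 1 - ‖v‖ ^ 2 := by linarith
  have hw1 : 1 / ((n : ℝ) + 1) ≤ 1 - ‖w‖ ^ 2 := by linarith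
  have hvpos : (0 : ℝ) < 1 / ((n : ℝ) + 1) := by positivity
  have hsqv : hv' ^ 2 = 1 - ‖v‖ ^ 2 := Real.sq_sqrt (by linarith)
  have hsqw : hw' ^ 2 = 1 - ‖w‖ ^ 2 := Real.sq_sqrt (by linarith)
  set s : ℝ := Real.sqrt ((n : ℝ) + 1) with hs
  have hspos : 0 < s := Real.sqrt_pos.mpr hn1
  have hs2 : s ^ 2 = (n : ℝ) + 1 := Real.sq_sqrt hn1.le
  have hvlo : 1 / s ≤ hv' := by
    rw [hhv, one_div, ← Real.sqrt_inv, ← one_div]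
    exact Real.sqrt_le_sqrt hv1
  have hwlo : 1 / s ≤ hw' := by
    rw [hhw, one_div, ← Real.sqrt_inv, ← one_div]
    exact Real.sqrt_le_sqrt hw1
  have hvn : ‖v‖ ≤ 1 := by nlinarith [norm_nonneg v]
  have hwn : ‖w‖ ≤ 1 := by nlinarith [norm_nonneg w]
  have hdiff : (hv' - hw') * (hv' + hw') = ‖w‖ ^ 2 - ‖v‖ ^ 2 := by
    have : (hv' - hw') * (hv' + hw') = hv' ^ 2 - hw' ^ 2 := by ring
    rw [this, hsqv, hsqw]; ring
  have hnd : |‖w‖ - ‖v‖| ≤ dist v w := by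
    rw [dist_eq_norm, ← norm_neg (v - w)]
    simpa [abs_sub_comm] using abs_norm_sub_norm_le w v
  have habs : |hv' - hw'| ≤ s * dist v w := by
    have hsum : 2 / s ≤ hv' + hw' := by
      have h : 1 / s + 1 / s = 2 / s := by ring
      linarith
    have hsumpos : 0 < hv' + hw' := by
      have : (0:ℝ) < 2 / s := by positivity
      linarith
    have h1 : |hv' - hw'| * (hv' + hw') = |‖w‖ ^ 2 - ‖v‖ ^ 2| := by
      rw [← abs_of_pos hsumpos, ← abs_mul, hdiff]
    have h2 : |‖w‖ ^ 2 - ‖v‖ ^ 2| ≤ 2 * dist v w := by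
      have : ‖w‖ ^ 2 - ‖v‖ ^ 2 = (‖w‖ + ‖v‖) * (‖w‖ - ‖v‖) := by ring
      rw [this, abs_mul]
      have h3 : |‖w‖ + ‖v‖| ≤ 2 := by
        rw [abs_of_nonneg (by positivity)]; linarith
      have := abs_nonneg (‖w‖ - ‖v‖)
      nlinarith [dist_nonneg (x := v) (y := w)]
    have h4 : |hv' - hw'| * (2 / s) ≤ 2 * dist v w := by
      calc |hv' - hw'| * (2 / s) ≤ |hv' - hw'| * (hv' + hw') := by
            apply mul_le_mul_of_nonneg_left hsum (abs_nonneg _)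
        _ ≤ 2 * dist v w := by rw [h1]; exact h2
    have h5 := mul_le_mul_of_nonneg_right h4 hspos.le
    have h6 : |hv' - hw'| * (2 / s) * s = |hv' - hw'| * 2 := by
      field_simp
    rw [h6] at h5
    nlinarith [abs_nonneg (hv' - hw')]
  -- now compute the distance
  have hdist : dist (capMap i σ v) (capMap i σ w)
      = Real.sqrt ((σ * hv' - σ * hw') ^ 2 + ∑ j, (v j - w j) ^ 2) := by
    rw [EuclideanSpace.dist_eq]
    congr 1
    rw [Fin.sum_univ_succAbove _ i]
    simp only [capMap, WithLp.ofLp_toLp, Fin.insertNth_apply_same, Fin.insertNth_apply_succAbove, ← hhv, ← hhw]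
    congr 1
    · rw [Real.dist_eq, sq_abs]
    · exact Finset.sum_congr rfl fun j _ => by rw [Real.dist_eq, sq_abs]
  have hsum2 : ∑ j, (v j - w j) ^ 2 = dist v w ^ 2 := by
    rw [EuclideanSpace.dist_eq, Real.sq_sqrt (by positivity)]
    exact Finset.sum_congr rfl fun j _ => by rw [Real.dist_eq, sq_abs]
  have hσ2 : σ ^ 2 = 1 := by rcases hσ with h | h <;> rw [h] <;> norm_num
  have hkey : (σ * hv' - σ * hw') ^ 2 ≤ ((n : ℝ) + 1) * dist v w ^ 2 := by
    have : (σ * hv' - σ * hw') ^ 2 = σ ^ 2 * (hv' - hw') ^ 2 := by ring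
    rw [this, hσ2, one_mul, ← sq_abs (hv' - hw')]
    calc |hv' - hw'| ^ 2 ≤ (s * dist v w) ^ 2 := by
          apply sq_le_sq' _ habs
          have := abs_nonneg (hv' - hw')
          have : 0 ≤ s * dist v w := by positivity
          linarith [abs_nonneg (hv' - hw')]
      _ = ((n : ℝ) + 1) * dist v w ^ 2 := by rw [mul_pow, hs2]
  rw [hdist, Real.coe_toNNReal _ (Real.sqrt_nonneg _), hsum2]
  calc Real.sqrt ((σ * hv' - σ * hw') ^ 2 + dist v w ^ 2)
      ≤ Real.sqrt (((n : ℝ) + 2) * dist v w ^ 2) := by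
        apply Real.sqrt_le_sqrt; nlinarith
    _ = Real.sqrt ((n : ℝ) + 2) * dist v w := by
        rw [Real.sqrt_mul (by positivity), Real.sqrt_sq dist_nonneg]

set_option maxHeartbeats 1000000 in
private lemma unit_sphere_hausdorff_ne_top (n : ℕ) :
    μH[(n : ℝ)] (sphere (0 : EuclideanSpace ℝ (Fin (n + 1))) 1) ≠ ⊤ := by
  classical
  set D : Set (EuclideanSpace ℝ (Fin n)) :=
    {v : EuclideanSpace ℝ (Fin n) | ‖v‖ ^ 2 + 1 / ((n : ℝ) + 1) ≤ 1} with hD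
  have hDclosed : IsClosed D :=
    isClosed_le (by fun_prop) continuous_const
  have hDsub : D ⊆ closedBall 0 1 := by
    intro v hv
    simp only [hD, Set.mem_setOf_eq] at hv
    have h1 : (0:ℝ) < 1 / ((n : ℝ) + 1) := by positivity
    have : ‖v‖ ≤ 1 := by nlinarith [norm_nonneg v]
    simpa [mem_closedBall, dist_zero_right] using this
  have hDcompact : IsCompact D :=
    (isCompact_closedBall (0 : EuclideanSpace ℝ (Fin n)) 1).of_isClosed_subset hDclosed hDsub
  have hDfin : μH[(n : ℝ)] D ≠ ⊤ := euclid_compact_hausdorff_ne_top hDcompact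
  -- covering of the sphere by the caps
  have hcover : sphere (0 : EuclideanSpace ℝ (Fin (n + 1))) 1 ⊆
      ⋃ p : Fin (n + 1) × Bool, capMap p.1 (cond p.2 1 (-1)) '' D := by
    intro y hy
    have hy1 : ‖y‖ = 1 := by simpa using hy
    have hsum : ∑ j, y j ^ 2 = 1 := by
      have := euclid_norm_sq y
      rw [hy1] at this
      linarith
    have hex : ∃ i, 1 / ((n : ℝ) + 1) ≤ y i ^ 2 := by
      by_contra hcon
      push_neg at hcon
      have hlt : ∑ j, y j ^ 2 < ∑ _j : Fin (n + 1), 1 / ((n : ℝ) + 1) :=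
        Finset.sum_lt_sum_of_nonempty Finset.univ_nonempty fun j _ => hcon j
      rw [hsum, Finset.sum_const, Finset.card_univ, Fintype.card_fin, nsmul_eq_mul] at hlt
      have hne : ((n : ℝ) + 1) ≠ 0 := by positivity
      have : ((n + 1 : ℕ) : ℝ) * (1 / ((n : ℝ) + 1)) = 1 := by
        push_cast
        field_simp
      rw [this] at hlt
      exact lt_irrefl _ hlt
    obtain ⟨i, hi⟩ := hex
    set v : EuclideanSpace ℝ (Fin n) := WithLp.toLp 2 (i.removeNth y) with hv
    have hvsum : ∑ j, v j ^ 2 = 1 - y i ^ 2 := by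
      have h := Fin.sum_univ_succAbove (fun j => y j ^ 2) i
      rw [hsum] at h
      have : ∑ j, v j ^ 2 = ∑ j : Fin n, y (i.succAbove j) ^ 2 := rfl
      rw [this]
      linarith
    have hvn : ‖v‖ ^ 2 = 1 - y i ^ 2 := by rw [euclid_norm_sq, hvsum]
    have hvD : v ∈ D := by
      simp only [hD, Set.mem_setOf_eq, hvn]
      linarith
    refine Set.mem_iUnion.2 ⟨(i, decide (0 ≤ y i)), ⟨v, hvD, ?_⟩⟩
    have hs : Real.sqrt (1 - ‖v‖ ^ 2) = |y i| := by
      rw [hvn]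
      have : 1 - (1 - y i ^ 2) = y i ^ 2 := by ring
      rw [this, Real.sqrt_sq_eq_abs]
    have hσ : (cond (decide (0 ≤ y i)) (1:ℝ) (-1)) * Real.sqrt (1 - ‖v‖ ^ 2) = y i := by
      rw [hs]
      by_cases h : 0 ≤ y i
      · simp [h, abs_of_nonneg h]
      · simp [h, abs_of_neg (lt_of_not_ge h)]
    show capMap i (cond (decide (0 ≤ y i)) 1 (-1)) v = y
    unfold capMap
    rw [hσ, hv]
    rw [WithLp.ofLp_toLp, Fin.insertNth_self_removeNth, WithLp.toLp_ofLp]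
  -- conclude
  have hle := measure_mono (μ := μH[(n : ℝ)]) hcover
  refine ne_top_of_le_ne_top ?_ (hle.trans (measure_iUnion_fintype_le _ _))
  rw [← lt_top_iff_ne_top]
  apply ENNReal.sum_lt_top.2
  intro p _
  have hlip := cap_lipschitz n p.1 (cond p.2 1 (-1))
    (by cases p.2 <;> simp)
  have := hlip.hausdorffMeasure_image_le (d := (n : ℝ)) (Nat.cast_nonneg n)
  refine lt_of_le_of_lt this ?_
  exact ENNReal.mul_lt_top
    (ENNReal.rpow_lt_top_of_nonneg (Nat.cast_nonneg n) ENNReal.coe_ne_top)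
    (lt_top_iff_ne_top.2 hDfin)

private lemma sphere_hausdorff_le (n : ℕ) (x : EuclideanSpace ℝ (Fin (n + 1))) {r : ℝ}
    (hr : 0 < r) :
    μH[(n : ℝ)] (sphere x r)
      ≤ ENNReal.ofReal (r ^ n) *
        μH[(n : ℝ)] (sphere (0 : EuclideanSpace ℝ (Fin (n + 1))) 1) := by
  have hf : LipschitzWith (Real.toNNReal r) (fun y : EuclideanSpace ℝ (Fin (n + 1)) => x + r • y) := by
    apply LipschitzWith.of_dist_le_mul
    intro y y'
    rw [dist_add_left, dist_smul₀, Real.coe_toNNReal _ hr.le, Real.norm_eq_abs, abs_of_pos hr]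
  have hsub : sphere x r ⊆
      (fun y : EuclideanSpace ℝ (Fin (n + 1)) => x + r • y) ''
        sphere (0 : EuclideanSpace ℝ (Fin (n + 1))) 1 := by
    intro y hy
    have hyx : dist y x = r := by simpa [dist_eq_norm] using hy
    refine ⟨r⁻¹ • (y - x), ?_, ?_⟩
    · have : ‖r⁻¹ • (y - x)‖ = 1 := by
        rw [norm_smul, norm_inv, Real.norm_eq_abs, abs_of_pos hr, ← dist_eq_norm, hyx]
        field_simp
      simpa [mem_sphere_iff_norm] using this
    · simp only [smul_smul, mul_inv_cancel₀ hr.ne', one_smul]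
      abel
  calc μH[(n : ℝ)] (sphere x r)
      ≤ μH[(n : ℝ)] ((fun y : EuclideanSpace ℝ (Fin (n + 1)) => x + r • y) ''
          sphere (0 : EuclideanSpace ℝ (Fin (n + 1))) 1) := measure_mono hsub
    _ ≤ (Real.toNNReal r : ENNReal) ^ (n : ℝ) *
          μH[(n : ℝ)] (sphere (0 : EuclideanSpace ℝ (Fin (n + 1))) 1) :=
        hf.hausdorffMeasure_image_le (Nat.cast_nonneg n) _
    _ = ENNReal.ofReal (r ^ n) * μH[(n : ℝ)] (sphere (0 : EuclideanSpace ℝ (Fin (n + 1))) 1) := by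
        have h1 : (Real.toNNReal r : ENNReal) = ENNReal.ofReal r := rfl
        rw [ENNReal.rpow_natCast, h1, ← ENNReal.ofReal_pow hr.le]

private lemma frontier_subset_spheres {E : Type*} [NormedAddCommGroup E] [NormedSpace ℝ E]
    (Z : Finset E) {r : ℝ} (hr : 0 < r) :
    frontier (⋃ z ∈ Z, ball z r) ⊆ ⋃ z ∈ Z, sphere z r := by
  intro x hx
  have hU : IsOpen (⋃ z ∈ Z, ball z r) := isOpen_biUnion fun _ _ => isOpen_ball
  rw [hU.frontier_eq] at hx
  obtain ⟨hx1, hx2⟩ := hx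
  rw [Finset.closure_biUnion] at hx1
  obtain ⟨z, hz, hxz⟩ := Set.mem_iUnion₂.1 hx1
  rw [closure_ball z hr.ne'] at hxz
  refine Set.mem_iUnion₂.2 ⟨z, hz, ?_⟩
  have hnb : x ∉ ball z r := fun h => hx2 (Set.mem_iUnion₂.2 ⟨z, hz, h⟩)
  rw [mem_closedBall] at hxz
  rw [mem_ball] at hnb
  exact le_antisymm hxz (not_lt.1 hnb)

/-- estimate (5.8) of the paper: the `(m-1)`-dimensional Hausdorff measure
of the boundary of `B(δ₁)` is at most `c' δ₁`. -/
theorem boundary_surface_measure_estimate {m : ℕ} (hm : 3 ≤ m)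
    (K : Set (EuclideanSpace ℝ (Fin m))) (hK : IsCompact K)
    (c₀ c₁ : ℝ) (Z : ℝ → Finset (EuclideanSpace ℝ (Fin m)))
    (hA : ConditionA m K c₀ c₁ Z)
    (c : ℝ) (hc : max (2 * c₀) c₁ < c) :
    ∃ c' : ℝ, 0 < c' ∧
      ∀ δ₁ : ℝ, 0 < δ₁ → δ₁ < Metric.diam K →
        MeasureTheory.Measure.hausdorffMeasure ((m : ℝ) - 1)
            (frontier (⋃ z ∈ Z δ₁, Metric.ball z (c * δ₁)))
          ≤ ENNReal.ofReal (c' * δ₁) := by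

  obtain ⟨n, rfl⟩ : ∃ n, m = n + 1 := ⟨m - 1, by omega⟩
  have hn2 : 2 ≤ n := by omega
  have hd : ((n + 1 : ℕ) : ℝ) - 1 = (n : ℝ) := by push_cast; ring
  rw [hd]
  obtain ⟨hc₀, hc₁, hAA⟩ := hA
  have hcpos : 0 < c := lt_trans hc₁ ((le_max_right (2 * c₀) c₁).trans_lt hc)
  set S := μH[(n : ℝ)] (sphere (0 : EuclideanSpace ℝ (Fin (n + 1))) 1) with hS
  have hSfin : S ≠ ⊤ := unit_sphere_hausdorff_ne_top n
  set dK := Metric.diam K with hdK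
  refine ⟨c₁ * (dK + 1) ^ (n - 1) * c ^ n * (S.toReal + 1), ?_, ?_⟩
  · have h1 : (0:ℝ) ≤ dK := Metric.diam_nonneg
    have h2 : (0:ℝ) ≤ S.toReal := ENNReal.toReal_nonneg
    positivity
  intro δ₁ hδ₁ hδdK
  have hdKpos : 0 < dK := lt_trans hδ₁ hδdK
  -- K is nonempty
  have hKne : K.Nonempty := by
    rcases Set.eq_empty_or_nonempty K with h | h
    · rw [hdK, h, Metric.diam_empty] at hdKpos; exact absurd hdKpos (lt_irrefl 0)
    · exact h
  obtain ⟨x₀, hx₀⟩ := hKne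
  obtain ⟨hZK, _, _, hZcount⟩ := hAA δ₁ hδ₁
  -- cardinality bound
  have hcard : ((Z δ₁).card : ℝ) ≤ c₁ * (dK / δ₁) ^ (n - 1) := by
    have h1 : ((Z δ₁ : Set (EuclideanSpace ℝ (Fin (n + 1)))) ∩
        Metric.closedBall x₀ dK) = (Z δ₁ : Set (EuclideanSpace ℝ (Fin (n + 1)))) := by
      apply Set.inter_eq_self_of_subset_left
      intro z hz
      exact Metric.mem_closedBall.2 (Metric.dist_le_diam_of_mem hK.isBounded (hZK hz) hx₀)
    have h2 := hZcount dK hδdK.le x₀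
    rw [h1, Set.ncard_coe_finset] at h2
    have h3 : n + 1 - 2 = n - 1 := by omega
    rwa [h3] at h2
  set r := c * δ₁ with hr
  have hrpos : 0 < r := by positivity
  -- frontier is inside the union of spheres
  have hfr := frontier_subset_spheres (Z δ₁) hrpos
  calc μH[(n : ℝ)] (frontier (⋃ z ∈ Z δ₁, Metric.ball z r))
      ≤ μH[(n : ℝ)] (⋃ z ∈ Z δ₁, sphere z r) := measure_mono hfr
    _ ≤ ∑ z ∈ Z δ₁, μH[(n : ℝ)] (sphere z r) := measure_biUnion_finset_le _ _
    _ ≤ ∑ _z ∈ Z δ₁, ENNReal.ofReal (r ^ (n + 1 - 1)) * S := by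
        refine Finset.sum_le_sum fun z _ => ?_
        have := sphere_hausdorff_le n z hrpos
        simpa using this
    _ = ((Z δ₁).card : ENNReal) * (ENNReal.ofReal (r ^ (n + 1 - 1)) * S) := by
        rw [Finset.sum_const, nsmul_eq_mul]
    _ ≤ ENNReal.ofReal (c₁ * (dK / δ₁) ^ (n - 1)) *
          (ENNReal.ofReal (r ^ (n + 1 - 1)) * ENNReal.ofReal (S.toReal)) := by
        rw [ENNReal.ofReal_toReal hSfin]
        gcongr
        rw [← ENNReal.ofReal_natCast]
        exact ENNReal.ofReal_le_ofReal hcard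
    _ = ENNReal.ofReal (c₁ * (dK / δ₁) ^ (n - 1) * (r ^ (n + 1 - 1) * S.toReal)) := by
        rw [← ENNReal.ofReal_mul (by positivity), ← ENNReal.ofReal_mul]
        have h1 : (0:ℝ) ≤ c₁ * (dK / δ₁) ^ (n - 1) := by positivity
        exact h1
    _ ≤ ENNReal.ofReal (c₁ * (dK + 1) ^ (n - 1) * c ^ n * (S.toReal + 1) * δ₁) := by
        apply ENNReal.ofReal_le_ofReal
        have hSr : (0:ℝ) ≤ S.toReal := ENNReal.toReal_nonneg
        have hnn : n - 1 + 1 = n := by omega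
        have heq : c₁ * (dK / δ₁) ^ (n - 1) * (r ^ (n + 1 - 1) * S.toReal)
            = c₁ * dK ^ (n - 1) * c ^ n * S.toReal * δ₁ := by
          have h4 : n + 1 - 1 = n := by omega
          rw [h4, hr, div_pow, mul_pow]
          rw [← hnn]
          field_simp
          ring_nf
          rw [Nat.add_sub_cancel_left]
        rw [heq]
        have hdK0 : (0:ℝ) ≤ dK := Metric.diam_nonneg
        have h5 : dK ^ (n - 1) ≤ (dK + 1) ^ (n - 1) :=
          pow_le_pow_left₀ hdK0 (by linarith) _
        have h7 : S.toReal ≤ S.toReal + 1 := by linarith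
        gcongr <;> positivity
end
end

section
/- Let m ≥ 3 and let K ⊂ ℝ^m be a compact set satisfying Condition A with constants c₀, c₁. Then there is a constant c > 0 (depending only on K, m and the Condition A constants) such that for every δ ∈ (0, diam K], the m-dimensional Lebesgue measure of the δ-neighborhood K_δ of K is at most c δ²; in particular, K has Lebesgue measure zero. -/
open MeasureTheory Metric Set Filter

noncomputable section

/-- for a compact set `K` satisfying Condition A, the Lebesgue measure of
the `δ`-neighborhood `K_δ` is at most `c δ²` for `0 < δ ≤ diam K`; in particular `K` has
Lebesgue measure zero. -/
theorem neighborhood_volume_estimate {m : ℕ} (hm : 3 ≤ m)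
    (K : Set (EuclideanSpace ℝ (Fin m))) (hK : IsCompact K)
    (c₀ c₁ : ℝ) (Z : ℝ → Finset (EuclideanSpace ℝ (Fin m)))
    (hA : ConditionA m K c₀ c₁ Z) :
    (∃ c : ℝ, 0 < c ∧
      ∀ δ : ℝ, 0 < δ → δ ≤ Metric.diam K →
        volume (Metric.thickening δ K) ≤ ENNReal.ofReal (c * δ ^ 2)) ∧
    volume K = 0 := by
  obtain ⟨hc₀, hc₁, hZ⟩ := hA
  have hD0 : 0 ≤ Metric.diam K := Metric.diam_nonneg
  set D := Metric.diam K with hDdef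
  set B : ENNReal := volume (Metric.ball (0 : EuclideanSpace ℝ (Fin m)) 1) with hBdef
  have hBlt : B < ⊤ := measure_ball_lt_top
  set Br : ℝ := B.toReal with hBrdef
  have hBr0 : 0 ≤ Br := ENNReal.toReal_nonneg
  have hBeq : B = ENNReal.ofReal Br := (ENNReal.ofReal_toReal hBlt.ne).symm
  set c : ℝ := max 1 (c₁ * c₀ ^ m * D ^ (m - 2) * Br) with hcdef
  have hcpos : 0 < c := lt_of_lt_of_le one_pos (le_max_left _ _)
  have hm2 : m - 2 + 2 = m := by omega
  have key : ∀ δ : ℝ, 0 < δ → δ ≤ D →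
      volume (Metric.thickening δ K) ≤ ENNReal.ofReal (c * δ ^ 2) := by
    intro δ hδ hδD
    obtain ⟨hZK, hsep, hcov, hcount⟩ := hZ δ hδ
    obtain ⟨x₀, hx₀⟩ : K.Nonempty := by
      by_contra h
      rw [Set.not_nonempty_iff_eq_empty] at h
      rw [hDdef, h, Metric.diam_empty] at hδD
      linarith
    have hsub : (Z δ : Set (EuclideanSpace ℝ (Fin m))) ⊆ Metric.closedBall x₀ D :=
      fun z hz => Metric.mem_closedBall.2 (Metric.dist_le_diam_of_mem hK.isBounded (hZK hz) hx₀)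
    have hcard : ((Z δ).card : ℝ) ≤ c₁ * (D / δ) ^ (m - 2) := by
      have h := hcount D hδD x₀
      rwa [Set.inter_eq_self_of_subset_left hsub, Set.ncard_coe_finset] at h
    have hball : ∀ z : EuclideanSpace ℝ (Fin m),
        volume (Metric.closedBall z (c₀ * δ)) = ENNReal.ofReal ((c₀ * δ) ^ m) * B := by
      intro z
      rw [Measure.addHaar_closedBall _ z (by positivity), finrank_euclideanSpace_fin]
    have hreal : ((Z δ).card : ℝ) * ((c₀ * δ) ^ m * Br) ≤ c * δ ^ 2 := by
      have hδne : δ ≠ 0 := hδ.ne'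
      have hstep : (D / δ) ^ (m - 2) * δ ^ m = D ^ (m - 2) * δ ^ 2 := by
        have hpow : δ ^ m = δ ^ (m - 2) * δ ^ 2 := by rw [← pow_add, hm2]
        rw [hpow, div_pow]
        field_simp
      calc ((Z δ).card : ℝ) * ((c₀ * δ) ^ m * Br)
          ≤ (c₁ * (D / δ) ^ (m - 2)) * ((c₀ * δ) ^ m * Br) :=
            mul_le_mul_of_nonneg_right hcard (by positivity)
        _ = (c₁ * c₀ ^ m * Br) * ((D / δ) ^ (m - 2) * δ ^ m) := by
            rw [mul_pow]; ring
        _ = (c₁ * c₀ ^ m * Br) * (D ^ (m - 2) * δ ^ 2) := by rw [hstep]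
        _ = (c₁ * c₀ ^ m * D ^ (m - 2) * Br) * δ ^ 2 := by ring
        _ ≤ c * δ ^ 2 := mul_le_mul_of_nonneg_right (le_max_right _ _) (by positivity)
    calc volume (Metric.thickening δ K)
        ≤ volume (⋃ z ∈ Z δ, Metric.closedBall z (c₀ * δ)) := measure_mono hcov
      _ ≤ ∑ z ∈ Z δ, volume (Metric.closedBall z (c₀ * δ)) := measure_biUnion_finset_le _ _
      _ = ((Z δ).card : ENNReal) * (ENNReal.ofReal ((c₀ * δ) ^ m) * B) := by
          simp [hball, Finset.sum_const, nsmul_eq_mul]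
      _ = ENNReal.ofReal (((Z δ).card : ℝ) * ((c₀ * δ) ^ m * Br)) := by
          rw [hBeq, ← ENNReal.ofReal_mul (by positivity), ← ENNReal.ofReal_natCast (Z δ).card,
            ← ENNReal.ofReal_mul (p := ((Z δ).card : ℝ)) (Nat.cast_nonneg _)]
      _ ≤ ENNReal.ofReal (c * δ ^ 2) := ENNReal.ofReal_le_ofReal hreal
  refine ⟨⟨c, hcpos, key⟩, ?_⟩
  rcases K.eq_empty_or_nonempty with h | ⟨x₀, hx₀⟩
  · simp [h]
  rcases eq_or_lt_of_le hD0 with hDz | hDpos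
  · have hsub : K ⊆ {x₀} := by
      intro y hy
      have h1 : dist y x₀ ≤ D := Metric.dist_le_diam_of_mem hK.isBounded hy hx₀
      rw [← hDz] at h1
      exact Set.mem_singleton_iff.2 (dist_le_zero.1 h1)
    have hsing : volume ({x₀} : Set (EuclideanSpace ℝ (Fin m))) = 0 := by
      have h0 : ({x₀} : Set (EuclideanSpace ℝ (Fin m))) = Metric.closedBall x₀ 0 := by simp
      rw [h0, Measure.addHaar_closedBall _ x₀ le_rfl, finrank_euclideanSpace_fin,
        zero_pow (by omega : m ≠ 0)]
      simp
    exact le_antisymm ((measure_mono hsub).trans (le_of_eq hsing)) zero_le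
  · refine le_antisymm (ENNReal.le_of_forall_pos_le_add fun ε hε _ => ?_) zero_le
    have hεR : (0 : ℝ) < ε := hε
    set δ : ℝ := min D (Real.sqrt (ε / c)) with hδdef
    have hδ0 : 0 < δ := lt_min hDpos (Real.sqrt_pos.2 (div_pos hεR hcpos))
    have hδD : δ ≤ D := min_le_left _ _
    have h1 : volume K ≤ ENNReal.ofReal (c * δ ^ 2) :=
      (measure_mono (Metric.self_subset_thickening hδ0 K)).trans (key δ hδ0 hδD)
    have h2 : c * δ ^ 2 ≤ (ε : ℝ) := by
      have hsq : δ ≤ Real.sqrt (ε / c) := min_le_right _ _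
      have hsq2 : δ ^ 2 ≤ ε / c := by
        have h3 := Real.sq_sqrt (le_of_lt (div_pos hεR hcpos))
        nlinarith [Real.sqrt_nonneg ((ε : ℝ) / c), hδ0.le]
      calc c * δ ^ 2 ≤ c * ((ε : ℝ) / c) := by nlinarith
        _ = (ε : ℝ) := by field_simp
    rw [zero_add]
    calc volume K ≤ ENNReal.ofReal (c * δ ^ 2) := h1
      _ ≤ ENNReal.ofReal (ε : ℝ) := ENNReal.ofReal_le_ofReal h2
      _ = (ε : ENNReal) := ENNReal.ofReal_coe_nnreal
end
end
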